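/- arXiv:2601.00414 — 8 statements merged into one kernel-verified Lean document; each statement's English description precedes it below -/
import Mathlib

section
/- Two distinct points p, q in the plane cannot be encapsulated by only two convex sets; at least 3 convex sets avoiding {p,q} are required to cover punctured neighborhoods of both p and q. -/
/-!
On the line through `p` and `q` choose points `a`, `b`, `c` with `a` before `p`, `b` strictly
between `p` and `q`, and `c` beyond `q`, all so close to `p` or `q` that encapsulation puts them in
`⋃ i, K i`. Each of the segments `[a, b]`, `[b, c]`, `[a, c]` passes through `p` or `q`, so by
convexity no `K i` contains two of the three points, and two sets cannot cover them.
-/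

open Filter Topology Set AffineMap

lemma mem_nhdsNE_of_inter_eq_diff {X : Type*} [TopologicalSpace X] {U N : Set X} {r : X}
    (hN : N ∈ 𝓝 r) (hU : U ∩ N = N \ {r}) : U ∈ 𝓝[≠] r :=
  mem_of_superset (inter_mem_nhdsWithin _ hN) fun x ⟨hx, hxN⟩ =>
    (hU.symm ▸ ⟨hxN, hx⟩ : x ∈ U ∩ N).1

section

variable {E : Type*} [AddCommGroup E] [Module ℝ E]

lemma tendsto_lineMap_nhdsNE [TopologicalSpace E] [IsTopologicalAddGroup E]
    [ContinuousSMul ℝ E] {p q : E} (hpq : p ≠ q) (t : ℝ) :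
    Tendsto (lineMap p q) (𝓝[≠] t) (𝓝[≠] lineMap p q t) :=
  lineMap_continuous.continuousWithinAt.tendsto_nhdsWithin fun _ hs =>
    (lineMap_injective ℝ hpq).ne hs

lemma lineMap_mem_segment_lineMap (p q : E) {a b t : ℝ} (ha : a ≤ t) (hb : t ≤ b) :
    lineMap p q t ∈ segment ℝ (lineMap p q a) (lineMap p q b) := by
  rw [← image_segment, segment_eq_Icc (ha.trans hb)]
  exact mem_image_of_mem _ ⟨ha, hb⟩

lemma ne_of_mem_segment_of_notMem {ι : Type*} {K : ι → Set E} (hK : ∀ i, Convex ℝ (K i))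
    {r x y : E} (hr : ∀ i, r ∉ K i) {i j : ι} (hx : x ∈ K i) (hy : y ∈ K j)
    (hxy : r ∈ segment ℝ x y) : i ≠ j := by
  rintro rfl
  exact hr i ((hK i).segment_subset hx hy hxy)

end

/-- Two distinct points of the plane cannot be encapsulated by two convex sets. -/
theorem stmt_1 (p q : ℝ × ℝ) (hpq : p ≠ q) (K : Fin 2 → Set (ℝ × ℝ))
    (hconv : ∀ i, Convex ℝ (K i))
    (hdisj : ∀ i, K i ⊆ ({p, q} : Set (ℝ × ℝ))ᶜ)
    (henc : ∀ r ∈ ({p, q} : Set (ℝ × ℝ)),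
      ∃ N ∈ nhds r, (⋃ i, K i) ∩ N = N \ {r}) : False := by
  have hline : ∀ t : ℝ, lineMap p q t ∈ ({p, q} : Set (ℝ × ℝ)) →
      ∀ᶠ s in 𝓝[≠] t, lineMap p q s ∈ ⋃ i, K i := fun t ht => by
    obtain ⟨N, hN, hNU⟩ := henc _ ht
    exact tendsto_lineMap_nhdsNE hpq t (mem_nhdsNE_of_inter_eq_diff hN hNU)
  have h0 := hline 0 (by simp)
  have h1 := hline 1 (by simp)
  obtain ⟨a, haU, ha⟩ := ((h0.filter_mono (nhdsLT_le_nhdsNE 0)).and self_mem_nhdsWithin).exists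
  obtain ⟨b, hbU, hb⟩ :=
    ((h0.filter_mono (nhdsGT_le_nhdsNE 0)).and (Ioo_mem_nhdsGT zero_lt_one)).exists
  obtain ⟨c, hcU, hc⟩ := ((h1.filter_mono (nhdsGT_le_nhdsNE 1)).and self_mem_nhdsWithin).exists
  obtain ⟨i, hai⟩ := mem_iUnion.mp haU
  obtain ⟨j, hbj⟩ := mem_iUnion.mp hbU
  obtain ⟨k, hck⟩ := mem_iUnion.mp hcU
  have hp : ∀ i, p ∉ K i := fun i hp => hdisj i hp (by simp)
  have hq : ∀ i, q ∉ K i := fun i hq => hdisj i hq (by simp)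
  have hij := ne_of_mem_segment_of_notMem hconv hp hai hbj
    (by simpa using lineMap_mem_segment_lineMap p q (le_of_lt ha) hb.1.le)
  have hjk := ne_of_mem_segment_of_notMem hconv hq hbj hck
    (by simpa using lineMap_mem_segment_lineMap p q hb.2.le (le_of_lt hc))
  have hik := ne_of_mem_segment_of_notMem hconv hp hai hck
    (by simpa using
      lineMap_mem_segment_lineMap p q (le_of_lt ha) (zero_le_one.trans (le_of_lt hc)))
  omega
end

section
/- The complement in ℝ² of a set of three points in general position (not collinear) can be covered by three pairwise disjoint convex sets. -/
/-!
After an affine change of coordinates the three points are `(1, 0)`, `(0, 0)` and `(0, 1)`, and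
preimages under affine maps preserve convexity, disjointness and unions. For these three points
take the open half-plane `x < 0` together with the open segment from `(0, 0)` to `(0, 1)`; the
quadrant `x ≥ 0, y < 0` together with the open segment from `(0, 0)` to `(1, 0)`; and the open
quadrant `x, y > 0` together with the two open rays beyond `(1, 0)` and `(0, 1)`. Each piece is an
intersection of sets of the form "open half-plane plus a convex part of its boundary line", and
such sets are convex.
-/

section HalfSpace

variable {𝕜 E : Type*} [Field 𝕜] [LinearOrder 𝕜] [IsStrictOrderedRing 𝕜] [AddCommGroup E]
  [Module 𝕜 E]

theorem Convex.setOf_lt_or_eq_and_mem {s : Set E} (hs : Convex 𝕜 s) (f : E →ₗ[𝕜] 𝕜) (c : 𝕜) :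
    Convex 𝕜 {x | f x < c ∨ f x = c ∧ x ∈ s} := by
  refine convex_iff_forall_pos.2 fun x hx y hy a b ha hb hab => ?_
  have hc : a * c + b * c = c := by rw [← add_mul, hab, one_mul]
  simp only [Set.mem_ofPred_eq, map_add, map_smul, smul_eq_mul] at hx hy ⊢
  rcases hx with hx | ⟨hx, hxs⟩
  · left
    rcases hy with hy | ⟨hy, -⟩
    · linarith [mul_lt_mul_of_pos_left hx ha, mul_lt_mul_of_pos_left hy hb]
    · rw [hy]
      linarith [mul_lt_mul_of_pos_left hx ha]
  rcases hy with hy | ⟨hy, hys⟩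
  · left
    rw [hx]
    linarith [mul_lt_mul_of_pos_left hy hb]
  · exact Or.inr ⟨by rw [hx, hy, hc], hs hxs hys ha.le hb.le hab⟩

theorem Convex.setOf_gt_or_eq_and_mem {s : Set E} (hs : Convex 𝕜 s) (f : E →ₗ[𝕜] 𝕜) (c : 𝕜) :
    Convex 𝕜 {x | c < f x ∨ f x = c ∧ x ∈ s} := by
  simpa using hs.setOf_lt_or_eq_and_mem (-f) (-c)

end HalfSpace

section AffineCoordinates

variable {k V P : Type*} [Field k] [AddCommGroup V] [Module k V] [AddTorsor V P]

theorem linearIndependent_vsub_of_not_collinear {p₁ p₂ p₃ : P} (h : ¬Collinear k {p₁, p₂, p₃}) :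
    LinearIndependent k ![p₁ -ᵥ p₂, p₃ -ᵥ p₂] := by
  rw [← affineIndependent_iff_not_collinear_set,
    affineIndependent_iff_linearIndependent_vsub k _ (1 : Fin 3),
    ← linearIndependent_equiv (finSuccAboveEquiv (1 : Fin 3))] at h
  convert! h using 1
  ext i
  fin_cases i <;> rfl

theorem exists_affineEquiv_prod_of_not_collinear (hV : Module.finrank k V = 2) {p₁ p₂ p₃ : P}
    (h : ¬Collinear k {p₁, p₂, p₃}) :
    ∃ e : P ≃ᵃ[k] k × k, e p₁ = (1, 0) ∧ e p₂ = 0 ∧ e p₃ = (0, 1) := by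
  have hli := linearIndependent_vsub_of_not_collinear h
  have hcard : Fintype.card (Fin 2) = Module.finrank k V := by simp [hV]
  let b := basisOfLinearIndependentOfCardEqFinrank hli hcard
  have hb : ⇑b = ![p₁ -ᵥ p₂, p₃ -ᵥ p₂] := coe_basisOfLinearIndependentOfCardEqFinrank hli hcard
  have hb₀ : p₁ -ᵥ p₂ = b 0 := by simp [hb]
  have hb₁ : p₃ -ᵥ p₂ = b 1 := by simp [hb]
  refine ⟨(AffineEquiv.vaddConst k p₂).symm.trans
    (b.equivFun.trans (LinearEquiv.finTwoArrow k k)).toAffineEquiv, ?_, ?_, ?_⟩ <;>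
    simp [hb₀, hb₁]

end AffineCoordinates

def IsDisjointConvexCover (𝕜 : Type*) {E ι : Type*} [Semiring 𝕜] [PartialOrder 𝕜]
    [AddCommMonoid E] [Module 𝕜 E] (K : ι → Set E) (X : Set E) : Prop :=
  (∀ i, Convex 𝕜 (K i)) ∧ (∀ i j, i ≠ j → Disjoint (K i) (K j)) ∧ ⋃ i, K i = X

theorem IsDisjointConvexCover.preimage {𝕜 E F ι : Type*} [Ring 𝕜] [PartialOrder 𝕜]
    [AddCommGroup E] [Module 𝕜 E] [AddCommGroup F] [Module 𝕜 F]
    {K : ι → Set F} {X : Set F} (h : IsDisjointConvexCover 𝕜 K X) (e : E →ᵃ[𝕜] F) :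
    IsDisjointConvexCover 𝕜 (fun i => e ⁻¹' K i) (e ⁻¹' X) := by
  obtain ⟨hconv, hdisj, hunion⟩ := h
  exact ⟨fun i => (hconv i).affine_preimage e, fun i j hij => (hdisj i j hij).preimage e,
    by rw [← Set.preimage_iUnion, hunion]⟩

def cornerCover : Fin 3 → Set (ℝ × ℝ) :=
  ![{z | z.1 < 0 ∨ z.1 = 0 ∧ (0 < z.2 ∧ z.2 < 1)},
    {z | 0 ≤ z.1 ∧ (z.2 < 0 ∨ z.2 = 0 ∧ (0 < z.1 ∧ z.1 < 1))},
    {z | (0 < z.1 ∨ z.1 = 0 ∧ 1 < z.2) ∧ (0 < z.2 ∨ z.2 = 0 ∧ 1 < z.1)}]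

theorem convex_cornerCover (i : Fin 3) : Convex ℝ (cornerCover i) := by
  have hfst : Convex ℝ (Prod.fst ⁻¹' Set.Ioo (0 : ℝ) 1 : Set (ℝ × ℝ)) :=
    (convex_Ioo 0 1).linear_preimage (LinearMap.fst ℝ ℝ ℝ)
  have hsnd : Convex ℝ (Prod.snd ⁻¹' Set.Ioo (0 : ℝ) 1 : Set (ℝ × ℝ)) :=
    (convex_Ioo 0 1).linear_preimage (LinearMap.snd ℝ ℝ ℝ)
  have hfst' : Convex ℝ (Prod.fst ⁻¹' Set.Ioi (1 : ℝ) : Set (ℝ × ℝ)) :=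
    (convex_Ioi 1).linear_preimage (LinearMap.fst ℝ ℝ ℝ)
  have hsnd' : Convex ℝ (Prod.snd ⁻¹' Set.Ioi (1 : ℝ) : Set (ℝ × ℝ)) :=
    (convex_Ioi 1).linear_preimage (LinearMap.snd ℝ ℝ ℝ)
  fin_cases i
  · exact hsnd.setOf_lt_or_eq_and_mem (LinearMap.fst ℝ ℝ ℝ) 0
  · exact (convex_halfSpace_ge (LinearMap.fst ℝ ℝ ℝ).isLinear 0).inter
      (hfst.setOf_lt_or_eq_and_mem (LinearMap.snd ℝ ℝ ℝ) 0)
  · exact (hsnd'.setOf_gt_or_eq_and_mem (LinearMap.fst ℝ ℝ ℝ) 0).inter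
      (hfst'.setOf_gt_or_eq_and_mem (LinearMap.snd ℝ ℝ ℝ) 0)

theorem isDisjointConvexCover_cornerCover :
    IsDisjointConvexCover ℝ cornerCover {(1, 0), 0, (0, 1)}ᶜ := by
  refine ⟨convex_cornerCover, fun i j hij => Set.disjoint_left.2 ?_, ?_⟩
  · rintro ⟨x, y⟩
    fin_cases i <;> fin_cases j <;>
      simp only [cornerCover, Fin.zero_eta, Fin.mk_one, Fin.reduceFinMk, Matrix.cons_val_zero,
        Matrix.cons_val_one, Matrix.cons_val, Set.mem_ofPred_eq] at hij ⊢ <;> grind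
  · ext ⟨x, y⟩
    simp only [Set.mem_iUnion, Fin.exists_fin_succ, Fin.exists_fin_zero, cornerCover,
      Fin.succ_zero_eq_one, Fin.succ_one_eq_two, Matrix.cons_val_zero, Matrix.cons_val_one,
      Matrix.cons_val, Set.mem_ofPred_eq, Set.mem_compl_iff, Set.mem_insert_iff,
      Set.mem_singleton_iff, Prod.ext_iff, Prod.fst_zero, Prod.snd_zero]
    grind

/-- The complement of three non-collinear points in the plane can be covered by
three pairwise disjoint convex sets. -/
theorem stmt_3 (p q r : ℝ × ℝ) (hgen : ¬ Collinear ℝ ({p, q, r} : Set (ℝ × ℝ))) :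
    ∃ K : Fin 3 → Set (ℝ × ℝ),
      (∀ i, Convex ℝ (K i)) ∧
      (∀ i j, i ≠ j → Disjoint (K i) (K j)) ∧
      (⋃ i, K i) = ({p, q, r} : Set (ℝ × ℝ))ᶜ := by
  obtain ⟨e, hp, hq, hr⟩ := exists_affineEquiv_prod_of_not_collinear (by simp) hgen
  have hcorners : e ⁻¹' {(1, 0), 0, (0, 1)} = {p, q, r} := by
    ext x
    simp [← hp, ← hq, ← hr]
  have hcover := isDisjointConvexCover_cornerCover.preimage e.toAffineMap
  rw [Set.preimage_compl, AffineEquiv.coe_toAffineMap, hcorners] at hcover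
  exact ⟨_, hcover⟩
end

section
/- For any set P of n points in convex position in the plane (n ≥ 4), the set ℝ² \ P can be covered by ⌊(n+5)/2⌋ convex sets. -/
/-!
After a shear the points of `P` have distinct abscissae. With `l` and `r` the leftmost and
rightmost points, listing `P` from `l` to `r` along the upper chain and back along the lower chain
makes consecutive points span edges of the polygon: a point weakly above one chord and weakly
below another one spanning its abscissa would lie in the convex hull of the other points. Every
other edge of this list, `⌈n/2⌉` edges in all, already has every point of `P` as an endpoint.

Each chosen edge `ab`, cut out by an affine `g` negative on the rest of `P`, contributes the open
half-plane `g > 0` together with the open ray of its line before `a`. Two more sets collect the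
points with `g ≤ 0` for all chosen edges that, on each chosen edge line through them, lie inside
the edge, respectively after `b`. Each set is an open half-plane plus a convex part of its boundary
line, or an intersection of such, hence convex, and `⌈n/2⌉ + 2 = ⌊(n+5)/2⌋`.
-/

open Set AffineMap

section

variable {E F : Type*} [AddCommGroup E] [Module ℝ E] [AddCommGroup F] [Module ℝ F]

theorem ConvexIndependent.image_linearMap {s : Set E} (hs : ConvexIndependent ℝ ((↑) : s → E))
    (f : E →ₗ[ℝ] F) (hf : Function.Injective f) : ConvexIndependent ℝ ((↑) : f '' s → F) := by
  rw [convexIndependent_set_iff_notMem_convexHull_sdiff] at hs ⊢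
  rintro _ ⟨x, hx, rfl⟩ h
  rw [← image_singleton, ← image_sdiff hf, ← LinearMap.image_convexHull, hf.mem_set_image] at h
  exact hs x hx h

def HasConvexCover (S : Set E) (N : ℕ) : Prop :=
  ∃ K : Fin N → Set E, (∀ i, Convex ℝ (K i)) ∧ ⋃ i, K i = S

theorem hasConvexCover_iUnion {κ : Type*} [Fintype κ] {K : κ → Set E}
    (hK : ∀ k, Convex ℝ (K k)) {N : ℕ} (hN : Fintype.card κ ≤ N) :
    HasConvexCover (⋃ k, K k) N := by
  let e := Fintype.equivFin κ
  refine ⟨fun i => if h : (i : ℕ) < Fintype.card κ then K (e.symm ⟨i, h⟩) else ∅,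
    fun i => ?_, ?_⟩
  · dsimp only
    split_ifs
    exacts [hK _, convex_empty]
  · ext x
    simp only [mem_iUnion]
    constructor
    · rintro ⟨i, hi⟩
      split_ifs at hi
      exacts [⟨_, hi⟩, hi.elim]
    · rintro ⟨k, hk⟩
      exact ⟨⟨e k, (e k).2.trans_le hN⟩, by simpa [dif_pos (e k).2] using hk⟩

theorem HasConvexCover.preimage {S : Set F} {N : ℕ} (h : HasConvexCover S N) (A : E →ₗ[ℝ] F) :
    HasConvexCover (A ⁻¹' S) N := by
  obtain ⟨K, hK, rfl⟩ := h
  exact ⟨fun i => A ⁻¹' K i, fun i => (hK i).linear_preimage A, (preimage_iUnion).symm⟩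

def openHalfspaceUnion (g : E →ᵃ[ℝ] ℝ) (S : Set E) : Set E :=
  {x | g x < 0 ∨ g x = 0 ∧ x ∈ S}

theorem Convex.openHalfspaceUnion (g : E →ᵃ[ℝ] ℝ) {S : Set E} (hS : Convex ℝ S) :
    Convex ℝ (openHalfspaceUnion g S) := by
  refine convex_iff_forall_pos.2 fun x hx y hy a b ha hb hab => ?_
  have hg : g (a • x + b • y) = a * g x + b * g y := Convex.combo_affine_apply hab
  rcases hx with hx | ⟨hx, hxS⟩ <;> rcases hy with hy | ⟨hy, hyS⟩
  · exact Or.inl (by rw [hg]; nlinarith)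
  · exact Or.inl (by rw [hg, hy]; nlinarith)
  · exact Or.inl (by rw [hg, hx]; nlinarith)
  · exact Or.inr ⟨by rw [hg, hx, hy]; ring, hS hxS hyS ha.le hb.le hab⟩

theorem AffineMap.eq_zero_of_mem_openSegment {g : E →ᵃ[ℝ] ℝ} {a b x : E}
    (hx : x ∈ openSegment ℝ a b) (hgx : g x = 0) (ha : g a ≤ 0) (hb : g b ≤ 0) :
    g a = 0 ∧ g b = 0 := by
  rw [openSegment_eq_image_lineMap] at hx
  obtain ⟨s, ⟨hs0, hs1⟩, rfl⟩ := hx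
  rw [apply_lineMap, lineMap_apply_ring] at hgx
  constructor <;> nlinarith

def IsEdgeFunctional (P : Set E) (a b : E) (g : E →ᵃ[ℝ] ℝ) : Prop :=
  (∀ x, g x = 0 ↔ x ∈ line[ℝ, a, b]) ∧ ∀ q ∈ P, q ≠ a → q ≠ b → g q < 0

def IsEdge (P : Set E) (a b : E) : Prop :=
  a ∈ P ∧ b ∈ P ∧ a ≠ b ∧ ∃ g : E →ᵃ[ℝ] ℝ, IsEdgeFunctional P a b g

namespace IsEdgeFunctional

variable {P : Set E} {a b x : E} {g : E →ᵃ[ℝ] ℝ} (hg : IsEdgeFunctional P a b g)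
include hg

theorem apply_eq_zero_iff : g x = 0 ↔ ∃ s : ℝ, lineMap a b s = x :=
  (hg.1 x).trans mem_affineSpan_pair_iff_exists_lineMap_eq

theorem apply_left : g a = 0 := hg.apply_eq_zero_iff.2 ⟨0, lineMap_apply_zero _ _⟩

theorem apply_right : g b = 0 := hg.apply_eq_zero_iff.2 ⟨1, lineMap_apply_one _ _⟩

theorem eq_or_eq_of_apply_eq_zero (hx : x ∈ P) (hgx : g x = 0) : x = a ∨ x = b := by
  by_contra! h
  exact (hg.2 x hx h.1 h.2).ne hgx

theorem apply_nonpos (hx : x ∈ P) : g x ≤ 0 := by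
  by_cases hxa : x = a
  · exact (hxa ▸ hg.apply_left).le
  by_cases hxb : x = b
  · exact (hxb ▸ hg.apply_right).le
  exact (hg.2 x hx hxa hxb).le

theorem eq_zero_or_eq_one_of_lineMap_mem (hab : a ≠ b) {s : ℝ} (hs : lineMap a b s ∈ P) :
    s = 0 ∨ s = 1 :=
  (hg.eq_or_eq_of_apply_eq_zero hs (hg.apply_eq_zero_iff.2 ⟨s, rfl⟩)).imp
    (by simpa [hab] using ·) (by simpa [hab] using ·)

theorem mem_openSegment {a' b' : E} (ha' : a' ∈ P) (hb' : b' ∈ P) (hab' : a' ≠ b')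
    (hx : x ∈ openSegment ℝ a' b') (hgx : g x = 0) : x ∈ openSegment ℝ a b := by
  obtain ⟨ha'0, hb'0⟩ := g.eq_zero_of_mem_openSegment hx hgx (hg.apply_nonpos ha')
    (hg.apply_nonpos hb')
  rcases hg.eq_or_eq_of_apply_eq_zero ha' ha'0 with rfl | rfl <;>
    rcases hg.eq_or_eq_of_apply_eq_zero hb' hb'0 with rfl | rfl
  · exact absurd rfl hab'
  · exact hx
  · rwa [openSegment_symm]
  · exact absurd rfl hab'

theorem notMem_openHalfspaceUnion_neg (hab : a ≠ b) (hx : x ∈ P) :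
    x ∉ openHalfspaceUnion (-g) (lineMap a b '' Iio (0 : ℝ)) := by
  rintro (hpos | ⟨-, s, hs, rfl⟩)
  · exact (hg.apply_nonpos hx).not_gt (by simpa using hpos)
  · rcases hg.eq_zero_or_eq_one_of_lineMap_mem hab hx with rfl | rfl <;> norm_num at hs

theorem notMem_openHalfspaceUnion_openSegment (hab : a ≠ b) (hx : x = a ∨ x = b) :
    x ∉ openHalfspaceUnion g (openSegment ℝ a b) := by
  rcases hx with rfl | rfl <;> rintro (hneg | ⟨-, hseg⟩)
  · exact hneg.ne hg.apply_left
  · exact hab (left_mem_openSegment_iff.1 hseg)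
  · exact hneg.ne hg.apply_right
  · exact hab (right_mem_openSegment_iff.1 hseg)

theorem notMem_openHalfspaceUnion_Ioi (hab : a ≠ b) (hxP : x ∈ P) (hx : x = a ∨ x = b) :
    x ∉ openHalfspaceUnion g (lineMap a b '' Ioi (1 : ℝ)) := by
  rintro (hneg | ⟨-, s, hs, rfl⟩)
  · rcases hx with hx | hx
    exacts [hneg.ne (hx ▸ hg.apply_left), hneg.ne (hx ▸ hg.apply_right)]
  · rcases hg.eq_zero_or_eq_one_of_lineMap_mem hab hxP with rfl | rfl <;> norm_num at hs

end IsEdgeFunctional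

section EdgeCover

variable {ι : Type*} {P : Set E} {a b : ι → E} {g : ι → E →ᵃ[ℝ] ℝ}

theorem mem_openHalfspaceUnion_of_notMem (hg : ∀ i, IsEdgeFunctional P (a i) (b i) (g i))
    (ha : ∀ i, a i ∈ P) (hb : ∀ i, b i ∈ P) (hab : ∀ i, a i ≠ b i) {x : E} (hxP : x ∉ P)
    (hbefore : ∀ i, x ∉ openHalfspaceUnion (-g i) (lineMap (a i) (b i) '' Iio (0 : ℝ))) :
    (∀ i, x ∈ openHalfspaceUnion (g i) (openSegment ℝ (a i) (b i))) ∨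
      ∀ i, x ∈ openHalfspaceUnion (g i) (lineMap (a i) (b i) '' Ioi (1 : ℝ)) := by
  have hx_le : ∀ i, g i x ≤ 0 := fun i => by
    by_contra! h
    exact hbefore i (Or.inl (by simpa using h))
  by_cases hinside : ∃ i, g i x = 0 ∧ x ∈ openSegment ℝ (a i) (b i)
  · obtain ⟨i, -, hseg⟩ := hinside
    exact Or.inl fun j => (hx_le j).lt_or_eq.imp_right fun hgx =>
      ⟨hgx, (hg j).mem_openSegment (ha i) (hb i) (hab i) hseg hgx⟩
  push Not at hinside
  refine Or.inr fun i => (hx_le i).lt_or_eq.imp_right fun hgx => ⟨hgx, ?_⟩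
  obtain ⟨s, hsx⟩ := (hg i).apply_eq_zero_iff.1 hgx
  refine ⟨s, ?_, hsx⟩
  rw [mem_Ioi]
  by_contra! hs1
  rcases lt_or_ge s 0 with hs0 | hs0
  · exact hbefore i (Or.inr ⟨by simp [hgx], s, hs0, hsx⟩)
  rcases hs0.eq_or_lt with rfl | hs0
  · rw [← hsx, lineMap_apply_zero] at hxP
    exact hxP (ha i)
  rcases hs1.lt_or_eq with hs1 | rfl
  · refine hinside i hgx ?_
    rw [openSegment_eq_image_lineMap]
    exact ⟨s, ⟨hs0, hs1⟩, hsx⟩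
  · rw [← hsx, lineMap_apply_one] at hxP
    exact hxP (hb i)

theorem hasConvexCover_compl_of_isEdge [Fintype ι] (he : ∀ i, IsEdge P (a i) (b i))
    (hcover : ∀ p ∈ P, ∃ i, p = a i ∨ p = b i) {N : ℕ} (hN : Fintype.card ι + 2 ≤ N) :
    HasConvexCover Pᶜ N := by
  choose ha hb hab g hg using he
  let K : Option (Option ι) → Set E
    | some (some i) => openHalfspaceUnion (-g i) (lineMap (a i) (b i) '' Iio (0 : ℝ))
    | some none => ⋂ i, openHalfspaceUnion (g i) (openSegment ℝ (a i) (b i))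
    | none => ⋂ i, openHalfspaceUnion (g i) (lineMap (a i) (b i) '' Ioi (1 : ℝ))
  have hK : ∀ j, Convex ℝ (K j)
    | some (some i) => ((convex_Iio (0 : ℝ)).affine_image _).openHalfspaceUnion _
    | some none => convex_iInter fun i => (convex_openSegment _ _).openHalfspaceUnion _
    | none => convex_iInter fun i => ((convex_Ioi (1 : ℝ)).affine_image _).openHalfspaceUnion _
  suffices hKP : ⋃ j, K j = Pᶜ by
    simpa [hKP] using hasConvexCover_iUnion hK (N := N) (by simp; omega)
  ext x
  simp only [mem_iUnion, mem_compl_iff]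
  constructor
  · rintro ⟨j, hj⟩ hxP
    obtain ⟨i, hxi⟩ := hcover x hxP
    rcases j with _ | _ | k
    · exact (hg i).notMem_openHalfspaceUnion_Ioi (hab i) hxP hxi (mem_iInter.1 hj i)
    · exact (hg i).notMem_openHalfspaceUnion_openSegment (hab i) hxi (mem_iInter.1 hj i)
    · exact (hg k).notMem_openHalfspaceUnion_neg (hab k) hxP hj
  · intro hxP
    by_cases hbefore : ∃ i, x ∈ openHalfspaceUnion (-g i) (lineMap (a i) (b i) '' Iio (0 : ℝ))
    · obtain ⟨i, hi⟩ := hbefore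
      exact ⟨some (some i), hi⟩
    push Not at hbefore
    rcases mem_openHalfspaceUnion_of_notMem hg ha hb hab hxP hbefore with h | h
    exacts [⟨some none, mem_iInter.2 h⟩, ⟨none, mem_iInter.2 h⟩]

end EdgeCover

end

section Plane

/-- Twice the signed area of the triangle `a b x`, positive when `x` lies to the left of the line
from `a` to `b`. -/
noncomputable def orient (a b : ℝ × ℝ) : ℝ × ℝ →ᵃ[ℝ] ℝ where
  toFun x := (b.1 - a.1) * (x.2 - a.2) - (b.2 - a.2) * (x.1 - a.1)
  linear := (b.1 - a.1) • LinearMap.snd ℝ ℝ ℝ - (b.2 - a.2) • LinearMap.fst ℝ ℝ ℝ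
  map_vadd' x v := by
    simp only [vadd_eq_add, Prod.fst_add, Prod.snd_add, LinearMap.sub_apply, LinearMap.smul_apply,
      LinearMap.fst_apply, LinearMap.snd_apply, smul_eq_mul]
    ring

variable {P : Set (ℝ × ℝ)} {a b c d l r p q u v w x z : ℝ × ℝ}

@[simp]
theorem orient_apply : orient a b x = (b.1 - a.1) * (x.2 - a.2) - (b.2 - a.2) * (x.1 - a.1) := rfl

theorem orient_swap_left : orient b a x = -orient a b x := by simp only [orient_apply]; ring

theorem orient_swap_right : orient a x b = -orient a b x := by simp only [orient_apply]; ring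

theorem orient_swap_outer : orient x b a = -orient a b x := by simp only [orient_apply]; ring

theorem orient_left : orient a b a = 0 := by simp only [orient_apply]; ring

theorem orient_right : orient a b b = 0 := by simp only [orient_apply]; ring

theorem orient_eq_zero_iff_mem_line (hab : a ≠ b) : orient a b x = 0 ↔ x ∈ line[ℝ, a, b] := by
  rw [mem_affineSpan_pair_iff_exists_lineMap_eq]
  constructor
  · intro h
    rw [orient_apply] at h
    simp only [lineMap_apply_module, Prod.ext_iff, Prod.fst_add, Prod.snd_add, Prod.smul_fst,
      Prod.smul_snd, smul_eq_mul]
    rcases ne_or_eq a.1 b.1 with h1 | h1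
    · have hba : b.1 - a.1 ≠ 0 := sub_ne_zero.2 h1.symm
      refine ⟨(x.1 - a.1) / (b.1 - a.1), ?_, mul_left_cancel₀ hba ?_⟩
      · field_simp
        ring
      · field_simp
        linear_combination -h
    · have hba : b.2 - a.2 ≠ 0 := sub_ne_zero.2 fun h2 => hab (Prod.ext h1 h2.symm)
      have hx : x.1 = a.1 := by
        rw [← h1, sub_self, zero_mul, zero_sub, neg_eq_zero, mul_eq_zero] at h
        exact sub_eq_zero.1 (h.resolve_left hba)
      refine ⟨(x.2 - a.2) / (b.2 - a.2), ?_, ?_⟩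
      · rw [← h1, hx]
        ring
      · field_simp
        ring
  · rintro ⟨s, rfl⟩
    rw [apply_lineMap, orient_left, orient_right, lineMap_same_apply]

theorem exists_mem_segment_orient_eq (hap : a.1 ≤ p.1) (hpb : p.1 ≤ b.1) :
    ∃ z ∈ segment ℝ a b, z.1 = p.1 ∧ orient a b p = (b.1 - a.1) * (p.2 - z.2) := by
  have hp : p.1 ∈ (LinearMap.fst ℝ ℝ ℝ) '' segment ℝ a b := by
    rw [← LinearMap.coe_toAffineMap, image_segment, segment_eq_uIcc]
    exact Icc_subset_uIcc ⟨hap, hpb⟩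
  obtain ⟨z, hz, hzp⟩ := hp
  refine ⟨z, hz, hzp, ?_⟩
  have hz0 : orient a b z = 0 := by
    rw [segment_eq_image_lineMap] at hz
    obtain ⟨s, -, rfl⟩ := hz
    rw [apply_lineMap, orient_left, orient_right, lineMap_same_apply]
  simp only [LinearMap.fst_apply] at hzp
  simp only [orient_apply] at hz0 ⊢
  rw [← hzp] at *
  linear_combination hz0

theorem mem_segment_of_fst_eq (hz : z.1 = p.1) (hw : w.1 = p.1) (hzp : z.2 ≤ p.2)
    (hpw : p.2 ≤ w.2) : p ∈ segment ℝ z w := by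
  rw [← Prod.mk.eta (p := z), ← Prod.mk.eta (p := w), ← Prod.mk.eta (p := p), hz, hw,
    ← Prod.image_mk_segment_right, segment_eq_uIcc]
  exact mem_image_of_mem _ (Icc_subset_uIcc ⟨hzp, hpw⟩)

theorem ConvexIndependent.orient_pos_of_orient_nonneg (hP : ConvexIndependent ℝ ((↑) : P → ℝ × ℝ))
    (ha : a ∈ P) (hb : b ∈ P) (hc : c ∈ P) (hd : d ∈ P) (hp : p ∈ P)
    (hap : a.1 < p.1) (hpb : p.1 < b.1) (hcp : c.1 < p.1) (hpd : p.1 < d.1)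
    (habp : 0 ≤ orient a b p) : 0 < orient c d p := by
  by_contra! hcdp
  obtain ⟨z, hz, hzp, habz⟩ := exists_mem_segment_orient_eq hap.le hpb.le
  obtain ⟨w, hw, hwp, hcdw⟩ := exists_mem_segment_orient_eq hcp.le hpd.le
  have hzp2 : z.2 ≤ p.2 := by nlinarith
  have hpw2 : p.2 ≤ w.2 := by nlinarith
  have hsub : ∀ e ∈ P, e.1 ≠ p.1 → e ∈ convexHull ℝ (P \ {p}) := fun e he hep =>
    subset_convexHull ℝ _ ⟨he, fun h => hep (congrArg Prod.fst h)⟩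
  have hseg : segment ℝ z w ⊆ convexHull ℝ (P \ {p}) :=
    (convex_convexHull ℝ _).segment_subset
      ((convex_convexHull ℝ _).segment_subset (hsub a ha hap.ne) (hsub b hb hpb.ne') hz)
      ((convex_convexHull ℝ _).segment_subset (hsub c hc hcp.ne) (hsub d hd hpd.ne') hw)
  exact convexIndependent_set_iff_notMem_convexHull_sdiff.1 hP p hp
    (hseg (mem_segment_of_fst_eq hzp hwp hzp2 hpw2))

theorem isEdge_of_orient_neg (ha : a ∈ P) (hb : b ∈ P) (hab : a ≠ b)
    (h : ∀ q ∈ P, q ≠ a → q ≠ b → orient a b q < 0) : IsEdge P a b :=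
  ⟨ha, hb, hab, orient a b, fun _ => orient_eq_zero_iff_mem_line hab, h⟩

/-- Position along the boundary of the hull, running from `l` to `r` along the upper chain
`0 ≤ orient l r` and back along the lower one. -/
noncomputable def boundaryKey (l r p : ℝ × ℝ) : ℝ :=
  if 0 ≤ orient l r p then p.1 else 2 * r.1 - p.1

theorem boundaryKey_of_nonneg (h : 0 ≤ orient l r p) : boundaryKey l r p = p.1 := if_pos h

theorem boundaryKey_of_neg (h : orient l r p < 0) : boundaryKey l r p = 2 * r.1 - p.1 :=
  if_neg h.not_ge

theorem fst_lt_of_orient_neg (hinj : P.InjOn Prod.fst) (hr : r ∈ P) (hrmax : ∀ p ∈ P, p.1 ≤ r.1)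
    (hp : p ∈ P) (h : orient l r p < 0) : p.1 < r.1 :=
  (hrmax p hp).lt_of_ne fun h' => h.ne (hinj hp hr h' ▸ orient_right)

theorem injOn_boundaryKey (hinj : P.InjOn Prod.fst) (hr : r ∈ P) (hrmax : ∀ p ∈ P, p.1 ≤ r.1) :
    P.InjOn (boundaryKey l r) := by
  intro p hp q hq hpq
  refine hinj hp hq ?_
  have hrp := fst_lt_of_orient_neg (l := l) hinj hr hrmax hp
  have hrq := fst_lt_of_orient_neg (l := l) hinj hr hrmax hq
  rcases le_or_gt 0 (orient l r p) with h1 | h1 <;> rcases le_or_gt 0 (orient l r q) with h2 | h2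
  · rwa [boundaryKey_of_nonneg h1, boundaryKey_of_nonneg h2] at hpq
  · rw [boundaryKey_of_nonneg h1, boundaryKey_of_neg h2] at hpq
    linarith [hrmax p hp, hrq h2]
  · rw [boundaryKey_of_neg h1, boundaryKey_of_nonneg h2] at hpq
    linarith [hrmax q hq, hrp h1]
  · rw [boundaryKey_of_neg h1, boundaryKey_of_neg h2] at hpq
    linarith

section Chains

variable (hP : ConvexIndependent ℝ ((↑) : P → ℝ × ℝ)) (hinj : P.InjOn Prod.fst)
  (hl : l ∈ P) (hr : r ∈ P) (hlmin : ∀ p ∈ P, l.1 ≤ p.1) (hrmax : ∀ p ∈ P, p.1 ≤ r.1)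
include hP hinj hl hr hlmin hrmax

theorem isEdge_of_upper (hu : u ∈ P) (hv : v ∈ P) (hlru : 0 ≤ orient l r u)
    (hlrv : 0 ≤ orient l r v) (huv : u.1 < v.1)
    (hgap : ∀ q ∈ P, u.1 < q.1 → q.1 < v.1 → orient l r q ≤ 0) : IsEdge P u v := by
  refine isEdge_of_orient_neg hu hv (ne_of_apply_ne Prod.fst huv.ne) fun q hq hqu hqv => ?_
  by_contra! huvq
  rcases (hinj.ne hq hu hqu).lt_or_gt with hqu' | huq
  · have := hP.orient_pos_of_orient_nonneg hl hr hq hv hu (by linarith [hlmin q hq])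
      (by linarith [hrmax v hv]) hqu' huv hlru
    linarith [orient_swap_outer (a := u) (b := v) (x := q)]
  rcases (hinj.ne hq hv hqv).lt_or_gt with hqv' | hvq
  · have := hP.orient_pos_of_orient_nonneg hu hv hl hr hq huq hqv'
      (by linarith [hlmin u hu]) (by linarith [hrmax v hv]) huvq
    linarith [hgap q hq huq hqv']
  · have := hP.orient_pos_of_orient_nonneg hl hr hu hq hv (by linarith [hlmin u hu])
      (by linarith [hrmax q hq]) huv hvq hlrv
    linarith [orient_swap_right (a := u) (b := v) (x := q)]

theorem isEdge_of_lower (hu : u ∈ P) (hv : v ∈ P) (hlru : orient l r u ≤ 0)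
    (hlrv : orient l r v ≤ 0) (huv : u.1 < v.1)
    (hgap : ∀ q ∈ P, u.1 < q.1 → q.1 < v.1 → 0 ≤ orient l r q) : IsEdge P v u := by
  refine isEdge_of_orient_neg hv hu (ne_of_apply_ne Prod.fst huv.ne') fun q hq hqv hqu => ?_
  rw [orient_swap_left, neg_lt_zero]
  by_contra! huvq
  rcases (hinj.ne hq hu hqu).lt_or_gt with hqu' | huq
  · have := hP.orient_pos_of_orient_nonneg hq hv hl hr hu hqu' huv (by linarith [hlmin q hq])
      (by linarith [hrmax v hv]) (by linarith [orient_swap_outer (a := u) (b := v) (x := q)])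
    linarith
  rcases (hinj.ne hq hv hqv).lt_or_gt with hqv' | hvq
  · have := hP.orient_pos_of_orient_nonneg hl hr hu hv hq
      (by linarith [hlmin u hu]) (by linarith [hrmax v hv]) huq hqv' (hgap q hq huq hqv')
    linarith
  · have := hP.orient_pos_of_orient_nonneg hu hq hl hr hv huv hvq (by linarith [hlmin u hu])
      (by linarith [hrmax q hq]) (by linarith [orient_swap_right (a := u) (b := v) (x := q)])
    linarith

theorem isEdge_of_boundaryKey (hp : p ∈ P) (hq : q ∈ P)
    (hpq : boundaryKey l r p < boundaryKey l r q)
    (hgap : ∀ x ∈ P, boundaryKey l r p < boundaryKey l r x →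
      boundaryKey l r q ≤ boundaryKey l r x) :
    IsEdge P p q := by
  have hkey_r : boundaryKey l r r = r.1 := boundaryKey_of_nonneg orient_right.ge
  have hlt_r : ∀ x ∈ P, orient l r x < 0 → x.1 < r.1 := fun _ hx =>
    fst_lt_of_orient_neg hinj hr hrmax hx
  rcases le_or_gt 0 (orient l r p) with h1 | h1 <;> rcases le_or_gt 0 (orient l r q) with h2 | h2
  · rw [boundaryKey_of_nonneg h1, boundaryKey_of_nonneg h2] at hpq hgap
    refine isEdge_of_upper hP hinj hl hr hlmin hrmax hp hq h1 h2 hpq fun x hx hpx hxq => ?_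
    by_contra! h
    linarith [boundaryKey_of_nonneg h.le ▸ hgap x hx (boundaryKey_of_nonneg h.le ▸ hpx)]
  · rw [boundaryKey_of_nonneg h1, boundaryKey_of_neg h2] at hpq hgap
    obtain rfl : p = r := by
      by_contra hpr
      have := hgap r hr (hkey_r ▸ (hrmax p hp).lt_of_ne fun h => hpr (hinj hp hr h))
      linarith [hlt_r q hq h2]
    refine isEdge_of_lower hP hinj hl hr hlmin hrmax hq hp h2.le orient_right.le (hlt_r q hq h2)
      fun x hx hqx hxp => ?_
    by_contra! h
    linarith [boundaryKey_of_neg h ▸ hgap x hx (boundaryKey_of_neg h ▸ by linarith)]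
  · rw [boundaryKey_of_neg h1, boundaryKey_of_nonneg h2] at hpq
    linarith [hlt_r p hp h1, hrmax q hq]
  · rw [boundaryKey_of_neg h1, boundaryKey_of_neg h2] at hpq hgap
    refine isEdge_of_lower hP hinj hl hr hlmin hrmax hq hp h2.le h1.le (by linarith)
      fun x hx hqx hxp => ?_
    by_contra! h
    linarith [boundaryKey_of_neg h ▸ hgap x hx (boundaryKey_of_neg h ▸ by linarith)]

end Chains

end Plane

theorem exists_pairs_of_chain {α : Type*} {R : α → α → Prop} {m : ℕ} (hm : 2 ≤ m) (c : Fin m → α)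
    (hc : ∀ (i : ℕ) (hi : i + 1 < m), R (c ⟨i, by omega⟩) (c ⟨i + 1, hi⟩)) :
    ∃ a b : Fin ((m + 1) / 2) → α, (∀ j, R (a j) (b j)) ∧ ∀ i, ∃ j, c i = a j ∨ c i = b j := by
  refine ⟨fun j => c ⟨min (2 * (j : ℕ)) (m - 2), by omega⟩,
    fun j => c ⟨min (2 * (j : ℕ)) (m - 2) + 1, by omega⟩, fun j => hc _ _,
    fun i => ⟨⟨i / 2, by omega⟩, ?_⟩⟩
  rcases Nat.even_or_odd' (i : ℕ) with ⟨k, hk | hk⟩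
  · by_cases hkm : 2 * k ≤ m - 2
    · exact Or.inl (congrArg c (Fin.ext (by simp only; omega)))
    · exact Or.inr (congrArg c (Fin.ext (by simp only; omega)))
  · exact Or.inr (congrArg c (Fin.ext (by simp only; omega)))

theorem Finset.exists_strictMono_enum {α β : Type*} [LinearOrder β] (s : Finset α) {f : α → β}
    (hf : Set.InjOn f s) :
    ∃ c : Fin s.card → α, (∀ i, c i ∈ s) ∧ (∀ p ∈ s, ∃ i, c i = p) ∧ StrictMono (f ∘ c) := by
  classical
  have hcard : (s.image f).card = s.card := Finset.card_image_of_injOn hf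
  let φ := (s.image f).orderEmbOfFin hcard
  choose c hcs hfc using fun i => Finset.mem_image.1 ((s.image f).orderEmbOfFin_mem hcard i)
  refine ⟨c, hcs, fun p hp => ?_, fun i j hij => ?_⟩
  · have : f p ∈ Set.range φ := by
      rw [Finset.range_orderEmbOfFin]
      exact Finset.mem_image_of_mem f hp
    obtain ⟨i, hi⟩ := this
    exact ⟨i, hf (hcs i) hp ((hfc i).trans hi)⟩
  · simp only [Function.comp_apply, hfc]
    exact φ.strictMono hij

theorem hasConvexCover_compl_of_convexIndependent (P : Finset (ℝ × ℝ))
    (hP : ConvexIndependent ℝ ((↑) : ↥(P : Set (ℝ × ℝ)) → ℝ × ℝ))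
    (hinj : Set.InjOn Prod.fst (P : Set (ℝ × ℝ))) (hcard : 2 ≤ P.card) :
    HasConvexCover (P : Set (ℝ × ℝ))ᶜ ((P.card + 5) / 2) := by
  have hne : P.Nonempty := Finset.card_pos.1 (by omega)
  obtain ⟨l, hl, hlmin⟩ := P.exists_min_image Prod.fst hne
  obtain ⟨r, hr, hrmax⟩ := P.exists_max_image Prod.fst hne
  obtain ⟨c, hcP, hcsurj, hcmono⟩ :=
    P.exists_strictMono_enum (injOn_boundaryKey (l := l) hinj hr hrmax)
  have hchain : ∀ (i : ℕ) (hi : i + 1 < P.card),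
      IsEdge (P : Set (ℝ × ℝ)) (c ⟨i, by omega⟩) (c ⟨i + 1, hi⟩) := fun i hi =>
    isEdge_of_boundaryKey hP hinj hl hr hlmin hrmax (hcP _) (hcP _)
      (hcmono (Fin.mk_lt_mk.2 (Nat.lt_succ_self i))) fun x hx hcx => by
        obtain ⟨j, rfl⟩ := hcsurj x hx
        exact hcmono.monotone (Fin.mk_le_of_le_val (hcmono.lt_iff_lt.1 hcx))
  obtain ⟨a, b, hab, hcover⟩ := exists_pairs_of_chain hcard c hchain
  refine hasConvexCover_compl_of_isEdge hab (fun p hp => ?_) (by simp; omega)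
  obtain ⟨i, rfl⟩ := hcsurj p hp
  exact hcover i

theorem exists_linearEquiv_injOn_fst {P : Set (ℝ × ℝ)} (hP : P.Finite) :
    ∃ A : (ℝ × ℝ) ≃ₗ[ℝ] ℝ × ℝ, (A '' P).InjOn Prod.fst := by
  have hbad : ((fun pq : (ℝ × ℝ) × (ℝ × ℝ) => (pq.2.2 - pq.1.2) / (pq.1.1 - pq.2.1)) ''
      P ×ˢ P).Finite := (hP.prod hP).image _
  obtain ⟨t, ht⟩ := hbad.infinite_compl.nonempty
  let A : (ℝ × ℝ) ≃ₗ[ℝ] ℝ × ℝ :=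
    ((LinearEquiv.refl ℝ ℝ).skewProd (LinearEquiv.refl ℝ ℝ) (t • LinearMap.id)).trans
      (LinearEquiv.prodComm ℝ ℝ ℝ)
  have hA : ∀ p, (A p).1 = p.2 + t * p.1 := fun p => by simp [A]
  refine ⟨A, ?_⟩
  rintro _ ⟨p, hp, rfl⟩ _ ⟨q, hq, rfl⟩ hpq
  rw [hA, hA] at hpq
  congr 1
  by_cases h1 : p.1 = q.1
  · exact Prod.ext h1 (by rw [h1] at hpq; linarith)
  · refine absurd ⟨(p, q), ⟨hp, hq⟩, ?_⟩ ht
    field_simp [sub_ne_zero.2 h1]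
    linarith

/-- The complement of any `n ≥ 4` points in convex position in the plane can be
covered by `⌊(n+5)/2⌋` convex sets. -/
theorem stmt_5 (n : ℕ) (hn : 4 ≤ n) (P : Finset (ℝ × ℝ)) (hcard : P.card = n)
    (hconvpos : (P : Set (ℝ × ℝ)) ⊆ (convexHull ℝ (P : Set (ℝ × ℝ))).extremePoints ℝ) :
    ∃ K : Fin ((n + 5) / 2) → Set (ℝ × ℝ),
      (∀ i, Convex ℝ (K i)) ∧ (⋃ i, K i) = (P : Set (ℝ × ℝ))ᶜ := by
  have hP : ConvexIndependent ℝ ((↑) : ↥(P : Set (ℝ × ℝ)) → ℝ × ℝ) :=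
    (convex_convexHull ℝ _).convexIndependent_extremePoints.mono hconvpos
  obtain ⟨A, hA⟩ := exists_linearEquiv_injOn_fst P.finite_toSet
  have hcardA : (P.image A).card = n := by
    rw [Finset.card_image_of_injective _ A.injective, hcard]
  have hcover := hasConvexCover_compl_of_convexIndependent (P.image A)
    (by rw [Finset.coe_image]; exact hP.image_linearMap (A : (ℝ × ℝ) →ₗ[ℝ] ℝ × ℝ) A.injective)
    (by rwa [Finset.coe_image]) (by omega)
  rw [hcardA, Finset.coe_image] at hcover
  have := hcover.preimage (A : (ℝ × ℝ) →ₗ[ℝ] ℝ × ℝ)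
  rwa [LinearEquiv.coe_coe, preimage_compl, preimage_image_eq _ A.injective] at this
end

section
/- Four points in convex position in the plane cannot be encapsulated by three convex sets: if a₀,a₁,a₂,a₃ are in convex position and convex sets A, B, C ⊆ ℝ² \ {a₀,a₁,a₂,a₃} cover a punctured neighborhood of each aᵢ, we reach a contradiction; hence at least 4 convex sets are needed. -/
/-!
By Radon's theorem two of the segments between the four points cross at a point interior to
both, say `pq` and `rs`. Say that a set `K` approaches `x` along `d` if it contains `x + t • d`
for arbitrarily small `t > 0`. Encapsulation means that along every direction at each of the
four points one of the three sets approaches the point, while a convex set avoiding `x` cannot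
approach `x` along `d` and contain a point `x - c • d` with `c > 0`. Choose, for each ordered
pair `(x, y)`, a set approaching `x` along `x - y`, from outside the segment `xy`. Convexity
across the crossing diagonals then constrains these twelve choices among three sets so much
that no choice is possible.
-/

open Set Filter Topology

variable {E : Type*} [AddCommGroup E] [Module ℝ E]

def ApproachesAlong (K : Set E) (v d : E) : Prop :=
  ∃ᶠ t in 𝓝[>] (0 : ℝ), v + t • d ∈ K

theorem Convex.mem_of_add_smul_mem_of_sub_smul_mem {K : Set E} (hK : Convex ℝ K) {v d : E}
    {s c : ℝ} (hs : 0 < s) (hc : 0 < c) (h₁ : v + s • d ∈ K) (h₂ : v - c • d ∈ K) : v ∈ K := by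
  have hsc : 0 < s + c := by linarith
  convert hK h₁ h₂ (div_pos hc hsc).le (div_pos hs hsc).le (by field_simp; ring) using 1
  match_scalars <;> field_simp <;> ring

namespace ApproachesAlong

variable {K : Set E} {v w d : E}

theorem exists_mem_Ioo (h : ApproachesAlong K v d) {ε : ℝ} (hε : 0 < ε) :
    ∃ t ∈ Ioo 0 ε, v + t • d ∈ K := by
  obtain ⟨t, hK, ht⟩ := (h.and_eventually (Ioo_mem_nhdsGT hε)).exists
  exact ⟨t, ht, hK⟩

variable (hK : Convex ℝ K) (hv : v ∉ K)
include hK hv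

theorem sub_smul_notMem (h : ApproachesAlong K v d) {c : ℝ} (hc : 0 < c) : v - c • d ∉ K :=
  fun hmem ↦ by
    obtain ⟨t, ht, htK⟩ := h.exists_mem_Ioo one_pos
    exact hv (hK.mem_of_add_smul_mem_of_sub_smul_mem ht.1 hc htK hmem)

theorem not_neg (h : ApproachesAlong K v d) : ¬ ApproachesAlong K v (-d) := fun h' ↦ by
  obtain ⟨t, ht, htK⟩ := h'.exists_mem_Ioo one_pos
  exact h.sub_smul_notMem hK hv ht.1 (by simpa [sub_eq_add_neg] using htK)

theorem disjoint_openSegment (h : ApproachesAlong K v (v - w)) :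
    Disjoint K (openSegment ℝ v w) := by
  rw [openSegment_eq_image', Set.disjoint_right]
  rintro _ ⟨θ, hθ, rfl⟩ hmem
  refine h.sub_smul_notMem hK hv hθ.1 ?_
  convert hmem using 1
  module

theorem not_approachesAlong_sub_of_sub (h : ApproachesAlong K v (v - w)) :
    ¬ ApproachesAlong K w (v - w) := fun h' ↦ by
  obtain ⟨t, ht, htK⟩ := h'.exists_mem_Ioo one_pos
  refine (h.disjoint_openSegment hK hv).notMem_of_mem_left htK ?_
  rw [openSegment_symm, openSegment_eq_image']
  exact ⟨t, ht, rfl⟩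

theorem not_approachesAlong_sub_swap (h : ApproachesAlong K v (v - w)) :
    ¬ ApproachesAlong K w (w - v) := fun h' ↦ by
  obtain ⟨t, ht, htK⟩ := h'.exists_mem_Ioo one_pos
  refine h.sub_smul_notMem hK hv (c := 1 + t) (by linarith [ht.1]) ?_
  convert htK using 1
  module

end ApproachesAlong

theorem exists_approachesAlong_of_punctured_cover [TopologicalSpace E] [IsTopologicalAddGroup E]
    [ContinuousSMul ℝ E] {ι : Type*} [Finite ι] {K : ι → Set E} {v d : E} {N : Set E}
    (hN : N ∈ 𝓝 v) (hcover : (⋃ i, K i) ∩ N = N \ {v}) (hd : d ≠ 0) :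
    ∃ i, ApproachesAlong (K i) v d := by
  have hcont : Tendsto (fun t : ℝ ↦ v + t • d) (𝓝[>] 0) (𝓝 v) := by
    have : Continuous fun t : ℝ ↦ v + t • d := by fun_prop
    simpa using (this.tendsto 0).mono_left nhdsWithin_le_nhds
  have hev : ∀ᶠ t in 𝓝[>] (0 : ℝ), ∃ i, v + t • d ∈ K i := by
    filter_upwards [hcont hN, self_mem_nhdsWithin] with t htN (ht : 0 < t)
    have : v + t • d ∈ N \ {v} := ⟨htN, by simpa [ht.ne'] using hd⟩
    rw [← hcover] at this
    simpa using this.1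
  exact frequently_exists.1 hev.frequently

theorem exists_sub_eq_smul_add_smul_of_mem_openSegment {v q r s z : E}
    (hvq : z ∈ openSegment ℝ v q) (hrs : z ∈ openSegment ℝ r s) :
    ∃ α β : ℝ, 0 < α ∧ 0 < β ∧ 1 < α + β ∧ q - v = α • (r - v) + β • (s - v) := by
  obtain ⟨a, b, ha, hb, hab, rfl⟩ := hvq
  obtain ⟨c, d, hc, hd, hcd, hz⟩ := hrs
  refine ⟨c / b, d / b, by positivity, by positivity, ?_, ?_⟩
  · rw [← add_div, hcd, one_lt_div hb]
    linarith
  · obtain rfl : a = 1 - b := by linarith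
    obtain rfl : d = 1 - c := by linarith
    apply smul_right_injective E hb.ne'
    simp only [smul_add, smul_smul, mul_div_cancel₀ _ hb.ne']
    linear_combination (norm := module) -hz

variable {K : Set E} {v q r s z : E}

theorem exists_add_smul_mem_of_approachesAlong_or
    (h : ApproachesAlong K r (v - r) ∨ ApproachesAlong K r (r - v)) {M : ℝ} (hM : 1 < M) :
    ∃ m ∈ Ioo 0 M, v + m • (r - v) ∈ K := by
  rcases h with h | h
  · obtain ⟨t, ht, htK⟩ := h.exists_mem_Ioo one_pos
    refine ⟨1 - t, ⟨by linarith [ht.2], by linarith [ht.1]⟩, ?_⟩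
    convert htK using 1
    module
  · obtain ⟨t, ht, htK⟩ := h.exists_mem_Ioo (sub_pos.2 hM)
    refine ⟨1 + t, ⟨by linarith [ht.1], by linarith [ht.2]⟩, ?_⟩
    convert htK using 1
    module

theorem Convex.inter_openSegment_nonempty_of_mem_openSegment (hK : Convex ℝ K)
    (hvq : z ∈ openSegment ℝ v q) (hrs : z ∈ openSegment ℝ r s)
    (hr : ApproachesAlong K r (v - r) ∨ ApproachesAlong K r (r - v))
    (hs : ApproachesAlong K s (v - s) ∨ ApproachesAlong K s (s - v)) :
    (K ∩ openSegment ℝ v q).Nonempty := by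
  obtain ⟨α, β, hα, hβ, hαβ, hq⟩ := exists_sub_eq_smul_add_smul_of_mem_openSegment hvq hrs
  obtain ⟨m₁, ⟨hm₁, hm₁'⟩, hm₁K⟩ := exists_add_smul_mem_of_approachesAlong_or hr hαβ
  obtain ⟨m₂, ⟨hm₂, hm₂'⟩, hm₂K⟩ := exists_add_smul_mem_of_approachesAlong_or hs hαβ
  have hD : 0 < m₂ * α + m₁ * β := by positivity
  refine ⟨v + (m₁ * m₂ / (m₂ * α + m₁ * β)) • (q - v), ?_, ?_⟩
  · convert hK hm₁K hm₂K (by positivity : 0 ≤ m₂ * α / (m₂ * α + m₁ * β))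
      (by positivity : 0 ≤ m₁ * β / (m₂ * α + m₁ * β)) (by field_simp) using 1
    rw [hq]
    match_scalars <;> field_simp
    ring
  · rw [openSegment_eq_image']
    refine ⟨_, ⟨by positivity, ?_⟩, rfl⟩
    rw [div_lt_one hD]
    rcases le_total m₁ m₂ with h | h <;> nlinarith

theorem ApproachesAlong.of_mem_openSegment (hK : Convex ℝ K)
    (hvq : z ∈ openSegment ℝ v q) (hrs : z ∈ openSegment ℝ r s)
    (h : ApproachesAlong K v (v - r))
    (hq : ApproachesAlong K q (v - q) ∨ ApproachesAlong K q (q - v)) :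
    ApproachesAlong K v (s - v) := by
  obtain ⟨α, β, hα, hβ, -, hrel⟩ := exists_sub_eq_smul_add_smul_of_mem_openSegment hvq hrs
  obtain ⟨m, ⟨hm, -⟩, hmK⟩ := exists_add_smul_mem_of_approachesAlong_or hq one_lt_two
  -- `v + φ τ • (s - v)` is where the segment from `v + τ • (v - r)` to `v + m • (q - v)` crosses
  -- the ray from `v` through `s`.
  let φ : ℝ → ℝ := fun τ ↦ τ * m * β / (m * α + τ)
  have hφ : Tendsto φ (𝓝[>] 0) (𝓝[>] 0) := by
    refine tendsto_nhdsWithin_iff.2 ⟨?_, eventually_mem_nhdsWithin.mono fun τ (hτ : 0 < τ) ↦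
      show 0 < φ τ by positivity⟩
    have : ContinuousAt φ 0 := by
      refine ContinuousAt.div (by fun_prop) (by fun_prop) ?_
      simp only [add_zero]
      positivity
    simpa [φ] using this.tendsto.mono_left nhdsWithin_le_nhds
  refine hφ.frequently (h.mp (eventually_mem_nhdsWithin.mono fun τ (hτ : 0 < τ) hτK ↦ ?_))
  convert hK hτK hmK (by positivity : 0 ≤ m * α / (m * α + τ))
    (by positivity : 0 ≤ τ / (m * α + τ)) (by field_simp) using 1
  rw [hrel]
  dsimp only [φ]
  match_scalars <;> field_simp <;> ring

-- `oxy` is the index of a set approaching `x` along `x - y`; `pq` and `rs` are the crossing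
-- diagonals.
set_option synthInstance.maxHeartbeats 400000 in
set_option synthInstance.maxSize 4000 in
theorem false_of_outward_colors
    {opq oqp : Fin 3} (hpq : opq ≠ oqp) {opr orp : Fin 3} (hpr : opr ≠ orp)
    {ops osp : Fin 3} (hps : ops ≠ osp)
    (hp : ∀ X, X ≠ opr → X ≠ ops → X ≠ opq ∧ X ≠ oqp)
    (hpr' : opr ≠ opq → opr ≠ ops ∧ opr ≠ osp) (hps' : ops ≠ opq → ops ≠ opr ∧ ops ≠ orp)
    {oqr orq : Fin 3} (hqr : oqr ≠ orq) {oqs osq : Fin 3} (hqs : oqs ≠ osq)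
    (hq : ∀ X, X ≠ oqr → X ≠ oqs → X ≠ oqp ∧ X ≠ opq)
    (hqr' : oqr ≠ oqp → oqr ≠ oqs ∧ oqr ≠ osq) (hqs' : oqs ≠ oqp → oqs ≠ oqr ∧ oqs ≠ orq)
    {ors osr : Fin 3} (hrs : ors ≠ osr)
    (hr : ∀ X, X ≠ orp → X ≠ orq → X ≠ ors ∧ X ≠ osr)
    (hs : ∀ X, X ≠ osp → X ≠ osq → X ≠ osr ∧ X ≠ ors) : False := by
  revert opq oqp opr orp ops osp oqr orq oqs osq ors osr
  decide

section OutwardColors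

variable {ι : Type*} {K : Fin 3 → Set E} {a : ι → E} {o : ι → ι → Fin 3}
  (hK : ∀ i, Convex ℝ (K i)) (haK : ∀ j i, a j ∉ K i)
  (ho : ∀ u w, u ≠ w → ApproachesAlong (K (o u w)) (a u) (a u - a w))
include hK haK ho

theorem outward_ne_swap {u w : ι} (huw : u ≠ w) : o u w ≠ o w u := fun h ↦
  (ho u w huw).not_approachesAlong_sub_swap (hK _) (haK u _) (h ▸ ho w u huw.symm)

variable (hin : ∀ u w, u ≠ w → ∃ i, ApproachesAlong (K i) (a u) (a w - a u))
include hin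

theorem approachesAlong_or_of_ne_outward {u w : ι} (huw : u ≠ w) {X : Fin 3}
    (hX : X ≠ o u w) :
    ApproachesAlong (K X) (a w) (a u - a w) ∨ ApproachesAlong (K X) (a w) (a w - a u) := by
  obtain ⟨k, hk⟩ := hin w u huw.symm
  have hku : k ≠ o u w := by
    rintro rfl
    exact (ho u w huw).not_approachesAlong_sub_of_sub (hK _) (haK u _) hk
  have hkw : k ≠ o w u := by
    rintro rfl
    exact hk.not_neg (hK _) (haK w _) (by simpa using ho w u huw.symm)
  by_cases hXw : X = o w u
  · exact .inr (hXw ▸ ho w u huw.symm)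
  · obtain rfl : X = k := by have := outward_ne_swap hK haK ho huw; omega
    exact .inl hk

variable {z : E} {v q r s : ι} (hvq : v ≠ q) (hvr : v ≠ r) (hvs : v ≠ s)
  (hz₁ : z ∈ openSegment ℝ (a v) (a q)) (hz₂ : z ∈ openSegment ℝ (a r) (a s))
include hvq hvr hvs hz₁ hz₂

-- Such an `X` contains points on the rays from `v` through `r` and through `s`, not far beyond
-- `r` and `s`, so by convexity it meets the open diagonal `vq`.
theorem ne_outward_of_ne_outward (X : Fin 3) (hXr : X ≠ o v r) (hXs : X ≠ o v s) :
    X ≠ o v q ∧ X ≠ o q v := by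
  obtain ⟨y, hyK, hy⟩ := (hK X).inter_openSegment_nonempty_of_mem_openSegment hz₁ hz₂
    (approachesAlong_or_of_ne_outward hK haK ho hin hvr hXr)
    (approachesAlong_or_of_ne_outward hK haK ho hin hvs hXs)
  refine ⟨fun h ↦ ?_, fun h ↦ ?_⟩
  · exact ((ho v q hvq).disjoint_openSegment (hK _) (haK v _)).notMem_of_mem_left (h ▸ hyK) hy
  · refine ((ho q v hvq.symm).disjoint_openSegment (hK _) (haK q _)).notMem_of_mem_left
      (h ▸ hyK) ?_
    rwa [openSegment_symm]

-- The set `o v r` then meets the ray from `v` through `q`, so it approaches `v` along `s - v`.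
theorem outward_ne_of_outward_ne (h : o v r ≠ o v q) : o v r ≠ o v s ∧ o v r ≠ o s v := by
  have hside := (ho v r hvr).of_mem_openSegment (hK _) hz₁ hz₂
    (approachesAlong_or_of_ne_outward hK haK ho hin hvq h)
  refine ⟨fun h ↦ ?_, fun h ↦ ?_⟩
  · exact hside.not_neg (hK _) (haK v _) (by simpa [h] using ho v s hvs)
  · exact (ho s v hvs.symm).not_approachesAlong_sub_of_sub (hK _) (haK s _) (h ▸ hside)

end OutwardColors

theorem false_of_approachesAlong_of_mem_openSegment {ι : Type*} {K : Fin 3 → Set E}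
    (hK : ∀ i, Convex ℝ (K i)) {a : ι → E} (ha : Function.Injective a) (haK : ∀ j i, a j ∉ K i)
    (henc : ∀ j, ∀ d ≠ 0, ∃ i, ApproachesAlong (K i) (a j) d)
    {p q r s : ι} (hpq : p ≠ q) (hpr : p ≠ r) (hps : p ≠ s) (hqr : q ≠ r) (hqs : q ≠ s)
    (hrs : r ≠ s) {z : E} (hz₁ : z ∈ openSegment ℝ (a p) (a q))
    (hz₂ : z ∈ openSegment ℝ (a r) (a s)) : False := by
  have hout : ∀ u w, ∃ i, u ≠ w → ApproachesAlong (K i) (a u) (a u - a w) := fun u w ↦ by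
    by_cases huw : u = w
    · exact ⟨0, (absurd huw ·)⟩
    · obtain ⟨i, hi⟩ := henc u _ (sub_ne_zero.2 (ha.ne huw))
      exact ⟨i, fun _ ↦ hi⟩
  choose o ho using hout
  have hin (u w) (huw : u ≠ w) : ∃ i, ApproachesAlong (K i) (a u) (a w - a u) :=
    henc u _ (sub_ne_zero.2 (ha.ne huw.symm))
  have hswap {u w : ι} (huw : u ≠ w) := outward_ne_swap hK haK ho huw
  have hcorner {v q r s : ι} (hvq : v ≠ q) (hvr : v ≠ r) (hvs : v ≠ s) :=
    ne_outward_of_ne_outward hK haK ho hin hvq hvr hvs (z := z)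
  have hturn {v q r s : ι} (hvq : v ≠ q) (hvr : v ≠ r) (hvs : v ≠ s) :=
    outward_ne_of_outward_ne hK haK ho hin hvq hvr hvs (z := z)
  have hz₁' : z ∈ openSegment ℝ (a q) (a p) := by rwa [openSegment_symm]
  have hz₂' : z ∈ openSegment ℝ (a s) (a r) := by rwa [openSegment_symm]
  exact false_of_outward_colors (hswap hpq) (hswap hpr) (hswap hps)
    (hcorner hpq hpr hps hz₁ hz₂) (hturn hpq hpr hps hz₁ hz₂) (hturn hpq hps hpr hz₁ hz₂')
    (hswap hqr) (hswap hqs) (hcorner hpq.symm hqr hqs hz₁' hz₂)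
    (hturn hpq.symm hqr hqs hz₁' hz₂) (hturn hpq.symm hqs hqr hz₁' hz₂')
    (hswap hrs) (hcorner hrs hpr.symm hqr.symm hz₂ hz₁)
    (hcorner hrs.symm hps.symm hqs.symm hz₂' hz₁)

theorem ConvexIndependent.nontrivial_of_mem_convexHull {ι : Type*} {a : ι → E}
    (hc : ConvexIndependent ℝ a) {I J : Set ι} (hIJ : Disjoint I J) {z : E}
    (hI : z ∈ convexHull ℝ (a '' I)) (hJ : z ∈ convexHull ℝ (a '' J)) : I.Nontrivial := by
  rw [← not_subsingleton_iff]
  intro hsub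
  rcases hsub.eq_empty_or_singleton with rfl | ⟨i, rfl⟩
  · simp at hI
  · rw [image_singleton, convexHull_singleton, mem_singleton_iff] at hI
    subst hI
    exact hIJ.notMem_of_mem_left (mem_singleton i) (hc.mem_convexHull_iff J i |>.1 hJ)

theorem ConvexIndependent.mem_openSegment_of_mem_convexHull {ι : Type*} {a : ι → E}
    (hc : ConvexIndependent ℝ a) {I J : Set ι} {i j : ι} (hIij : I ⊆ {i, j}) (hi : i ∉ J)
    (hj : j ∉ J) {z : E} (hI : z ∈ convexHull ℝ (a '' I)) (hJ : z ∈ convexHull ℝ (a '' J)) :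
    z ∈ openSegment ℝ (a i) (a j) := by
  have hz : z ∈ segment ℝ (a i) (a j) := by
    rw [← convexHull_pair, ← image_pair]
    exact convexHull_mono (image_mono hIij) hI
  refine mem_openSegment_of_ne_left_right ?_ ?_ hz <;> rintro rfl
  · exact hi (hc.mem_convexHull_iff J i |>.1 hJ)
  · exact hj (hc.mem_convexHull_iff J j |>.1 hJ)

theorem ConvexIndependent.exists_mem_openSegment_inter {a : Fin 4 → E}
    (hc : ConvexIndependent ℝ a) (haff : ¬ AffineIndependent ℝ a) :
    ∃ p q r s, p ≠ q ∧ p ≠ r ∧ p ≠ s ∧ q ≠ r ∧ q ≠ s ∧ r ≠ s ∧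
      (openSegment ℝ (a p) (a q) ∩ openSegment ℝ (a r) (a s)).Nonempty := by
  obtain ⟨I, z, hzI, hzIc⟩ := Convex.radon_partition haff
  obtain ⟨p, hp, q, hq, hpq⟩ := hc.nontrivial_of_mem_convexHull disjoint_compl_right hzI hzIc
  obtain ⟨r, hr, s, hs, hrs⟩ := hc.nontrivial_of_mem_convexHull disjoint_compl_left hzIc hzI
  have hpr : p ≠ r := by rintro rfl; exact hr hp
  have hps : p ≠ s := by rintro rfl; exact hs hp
  have hqr : q ≠ r := by rintro rfl; exact hr hq
  have hqs : q ≠ s := by rintro rfl; exact hs hq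
  have hI : I ⊆ {p, q} := fun m hm ↦ by
    have : m ≠ r := by rintro rfl; exact hr hm
    have : m ≠ s := by rintro rfl; exact hs hm
    simp only [mem_insert_iff, mem_singleton_iff]
    omega
  have hIc : Iᶜ ⊆ {r, s} := fun m hm ↦ by
    have : m ≠ p := by rintro rfl; exact hm hp
    have : m ≠ q := by rintro rfl; exact hm hq
    simp only [mem_insert_iff, mem_singleton_iff]
    omega
  exact ⟨p, q, r, s, hpq, hpr, hps, hqr, hqs, hrs, z,
    hc.mem_openSegment_of_mem_convexHull hI (not_not.2 hp) (not_not.2 hq) hzI hzIc,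
    hc.mem_openSegment_of_mem_convexHull hIc hr hs hzIc hzI⟩

/-- Four points in convex position cannot be encapsulated by three convex sets. -/
theorem stmt_6 (a : Fin 4 → ℝ × ℝ) (hinj : Function.Injective a)
    (hconvpos : ∀ i, a i ∈ (convexHull ℝ (Set.range a)).extremePoints ℝ)
    (K : Fin 3 → Set (ℝ × ℝ)) (hconv : ∀ i, Convex ℝ (K i))
    (hdisj : ∀ i, K i ⊆ (Set.range a)ᶜ)
    (henc : ∀ j, ∃ N ∈ nhds (a j), (⋃ i, K i) ∩ N = N \ {a j}) : False := by
  have hc : ConvexIndependent ℝ a := hinj.convexIndependent_iff_set.1 <|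
    (convex_convexHull ℝ _).convexIndependent_extremePoints.mono (range_subset_iff.2 hconvpos)
  have haff : ¬ AffineIndependent ℝ a := by
    rw [← finrank_vectorSpan_le_iff_not_affineIndependent ℝ a (n := 2) rfl]
    exact (Submodule.finrank_le _).trans (by simp)
  obtain ⟨p, q, r, s, hpq, hpr, hps, hqr, hqs, hrs, z, hz₁, hz₂⟩ :=
    hc.exists_mem_openSegment_inter haff
  refine false_of_approachesAlong_of_mem_openSegment hconv hinj
    (fun j i h ↦ hdisj i h (mem_range_self j)) (fun j d hd ↦ ?_) hpq hpr hps hqr hqs hrs hz₁ hz₂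
  obtain ⟨N, hN, hcover⟩ := henc j
  exact exists_approachesAlong_of_punctured_cover hN hcover hd
end

section
/- Let P be a set of n ≥ 5 points in convex position, encapsulated by a family 𝒦 of convex sets, and suppose some point x in the interior of conv(P) lies in at least two sets of 𝒦. Then |𝒦| ≥ ⌈n/2⌉ + 2. -/
/-!
Push every point `p ∈ P` slightly outwards from `x`, to `p' = homothety x r p` with `r > 1`.
By encapsulation, for `r` close to `1` each `p'` lies in some member of `𝒦`; that member cannot
contain `x`, since `p` lies on the segment from `x` to `p'`. On the other hand no convex set
avoiding `P` contains three of the points `p'`: three distinct points `a, b, c ∈ P` are extreme,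
hence affinely independent, so in the plane they give barycentric coordinates for `x`. At most
one of these is negative, since otherwise the third vertex would be a convex combination of `x`
and the other two. If the coordinates of `x` at `b` and `c` are nonnegative, then for `r` close
to `1` the vertex `a` lies in the triangle `a' b' c'`. So the `n` points `p'` are covered by the
at most `|𝒦| - 2` members of `𝒦` not containing `x`, each containing at most two of them.
-/

open Set Filter Topology AffineMap Finset Module

section Topological

variable {E : Type*} [AddCommGroup E] [Module ℝ E] [TopologicalSpace E] [ContinuousAdd E]
  [ContinuousSMul ℝ E]

theorem tendsto_homothety_nhdsNE {x p : E} (hxp : x ≠ p) :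
    Tendsto (fun r : ℝ => homothety x r p) (𝓝[≠] 1) (𝓝[≠] p) := by
  refine tendsto_nhdsWithin_iff.2 ⟨tendsto_nhdsWithin_of_tendsto_nhds ?_, ?_⟩
  · simp only [homothety_apply, vsub_eq_sub, vadd_eq_add]
    exact ((continuous_id.smul continuous_const).add continuous_const).tendsto' 1 p (by simp)
  · filter_upwards [self_mem_nhdsWithin] with r (hr : r ≠ 1)
    simpa [homothety_eq_lineMap, hxp] using hr

end Topological

variable {E : Type*} [AddCommGroup E] [Module ℝ E]

theorem Convex.mem_of_homothety_mem {K : Set E} (hK : Convex ℝ K) {x p : E} {r : ℝ}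
    (hr : 1 ≤ r) (hx : x ∈ K) (hp : homothety x r p ∈ K) : p ∈ K := by
  have hr₀ : r ≠ 0 := by positivity
  have := hK.lineMap_mem hx hp ⟨inv_nonneg.2 (by positivity), inv_le_one_of_one_le₀ hr⟩
  rwa [← homothety_eq_lineMap, ← homothety_mul_apply, inv_mul_cancel₀ hr₀, homothety_one,
    id_apply] at this

theorem affineIndependent_of_mem_extremePoints {A : Set E} {a b c : E}
    (ha : a ∈ A.extremePoints ℝ) (hb : b ∈ A.extremePoints ℝ) (hc : c ∈ A.extremePoints ℝ)
    (hab : a ≠ b) (hac : a ≠ c) (hbc : b ≠ c) : AffineIndependent ℝ ![a, b, c] := by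
  rw [affineIndependent_iff_not_collinear_set]
  intro hcol
  have not_between : ∀ {p q s : E}, Wbtw ℝ p q s → q ≠ p → q ≠ s → q ∈ A.extremePoints ℝ →
      p ∈ A → s ∈ A → False := by
    intro p q s hw hqp hqs hq hp hs
    rw [Wbtw, affineSegment_eq_segment] at hw
    rcases (mem_extremePoints_iff_forall_segment.1 hq).2 p hp s hs hw with h | h
    exacts [hqp h.symm, hqs h.symm]
  rcases hcol.wbtw_or_wbtw_or_wbtw with h | h | h
  · exact not_between h hab.symm hbc hb ha.1 hc.1
  · exact not_between h hbc.symm hac.symm hc hb.1 ha.1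
  · exact not_between h hac hab ha hc.1 hb.1

theorem AffineBasis.exists_ne_coord_pos_of_mem_extremePoints {ι : Type*} [Fintype ι]
    {C : Set E} (hC : Convex ℝ C) (b : AffineBasis ι ℝ E) (hbC : ∀ j, b j ∈ C)
    {i : ι} (hi : b i ∈ C.extremePoints ℝ) {x : E} (hx : x ∈ C) (hxi : x ≠ b i) :
    ∃ j ≠ i, 0 < b.coord j x := by
  classical
  by_contra! hneg
  -- `b i` is the centre of mass of `x` and the other vertices, with weights `1` and
  -- `-coord j x ≥ 0`; these points all lie in the convex set `C \ {b i}`.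
  set w : ι → ℝ := Function.update (fun j => -b.coord j x) i 1
  set z : ι → E := Function.update b i x
  have hrest : ∀ j ≠ i, w j = -b.coord j x ∧ z j = b j := fun j hj => by
    simp [w, z, Function.update_of_ne hj]
  have hsum := b.sum_coord_apply_eq_one x
  rw [← add_sum_erase _ _ (mem_univ i)] at hsum
  have hw : ∑ j, w j = b.coord i x := by
    rw [← add_sum_erase _ _ (mem_univ i),
      sum_congr rfl fun j hj => (hrest j (ne_of_mem_erase hj)).1, sum_neg_distrib]
    simp only [w, Function.update_self]
    linarith
  have hwz : ∑ j, w j • z j = b.coord i x • b i := by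
    rw [← add_sum_erase _ _ (mem_univ i), sum_congr rfl fun j hj => by
      rw [(hrest j (ne_of_mem_erase hj)).1, (hrest j (ne_of_mem_erase hj)).2]]
    nth_rw 1 [← b.linear_combination_coord_eq_self x]
    rw [← add_sum_erase _ _ (mem_univ i)]
    simp [w, z]
  have hci : 1 ≤ b.coord i x := by
    linarith [sum_nonpos fun j (hj : j ∈ univ.erase i) => hneg j (ne_of_mem_erase hj)]
  have hmem : univ.centerMass w z ∈ C \ {b i} := by
    refine ((hC.mem_extremePoints_iff_convex_sdiff).1 hi).2.centerMass_mem (fun j _ => ?_)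
      (by linarith) (fun j _ => ?_)
    · rcases eq_or_ne j i with rfl | hj
      · simp [w]
      · simpa [(hrest j hj).1] using hneg j hj
    · rcases eq_or_ne j i with rfl | hj
      · simpa [z] using ⟨hx, hxi⟩
      · rw [(hrest j hj).2]
        exact ⟨hbC j, b.ind.injective.ne hj⟩
  refine hmem.2 ?_
  rw [centerMass, hw, hwz, smul_smul, inv_mul_cancel₀ (by linarith), one_smul]
  exact mem_singleton _

theorem AffineBasis.exists_forall_ne_coord_nonneg {C : Set E} (hC : Convex ℝ C)
    (b : AffineBasis (Fin 3) ℝ E) (hb : ∀ j, b j ∈ C.extremePoints ℝ) {x : E} (hx : x ∈ C)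
    (hxb : ∀ j, x ≠ b j) : ∃ i, ∀ j ≠ i, 0 ≤ b.coord j x := by
  obtain ⟨i, -, hmin⟩ := exists_min_image univ (fun j => b.coord j x) univ_nonempty
  refine ⟨i, fun j hji => ?_⟩
  by_contra! hj
  -- `coord i x ≤ coord j x < 0`, so both coordinates beside the third vertex `k` are negative
  have third : ∀ i j : Fin 3, j ≠ i → ∃ k, ∀ l ≠ k, l = j ∨ l = i := by decide
  obtain ⟨k, hk⟩ := third i j hji
  obtain ⟨l, hlk, hl⟩ :=
    b.exists_ne_coord_pos_of_mem_extremePoints hC (fun j => (hb j).1) (hb k) hx (hxb k)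
  have hij := hmin j (mem_univ j)
  rcases hk l hlk with rfl | rfl <;> linarith

theorem AffineBasis.eventually_mem_convexHull_image_homothety {ι : Type*} [Finite ι]
    (b : AffineBasis ι ℝ E) {x : E} {i : ι} (hx : ∀ j ≠ i, 0 ≤ b.coord j x) :
    ∀ᶠ r in 𝓝[>] (1 : ℝ), b i ∈ convexHull ℝ (homothety x r '' range b) := by
  have hcoord : ∀ j r, b.coord j (homothety x r⁻¹ (b i)) =
      r⁻¹ * (b.coord j (b i) - b.coord j x) + b.coord j x := fun j r => by
    rw [homothety_eq_lineMap, apply_lineMap, lineMap_apply_ring']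
  have hnonneg : ∀ j, ∀ᶠ r in 𝓝[>] (1 : ℝ), 0 ≤ b.coord j (homothety x r⁻¹ (b i)) := by
    intro j
    rcases eq_or_ne j i with rfl | hji
    · have hlim : Tendsto (fun r : ℝ => r⁻¹ * (1 - b.coord j x) + b.coord j x) (𝓝 1) (𝓝 1) := by
        simpa using ((tendsto_inv₀ one_ne_zero).mul_const (1 - b.coord j x)).add_const
          (b.coord j x)
      filter_upwards [nhdsWithin_le_nhds (hlim.eventually (lt_mem_nhds one_pos))] with r hr
      rw [hcoord, b.coord_apply_eq]
      exact hr.le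
    · filter_upwards [self_mem_nhdsWithin] with r (hr : 1 < r)
      rw [hcoord, b.coord_apply_ne hji]
      have : r⁻¹ ≤ 1 := inv_le_one_of_one_le₀ hr.le
      nlinarith [hx j hji]
  filter_upwards [eventually_all.2 hnonneg, self_mem_nhdsWithin] with r hr (hr1 : 1 < r)
  rw [← AffineMap.image_convexHull, b.convexHull_eq_nonneg_coord]
  refine ⟨_, hr, ?_⟩
  rw [← homothety_mul_apply, mul_inv_cancel₀ (by positivity), homothety_one, id_apply]

theorem eventually_mem_of_homothety_mem_of_mem_extremePoints (hE : finrank ℝ E = 2)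
    {C : Set E} (hC : Convex ℝ C) {a b c x : E} (ha : a ∈ C.extremePoints ℝ)
    (hb : b ∈ C.extremePoints ℝ) (hc : c ∈ C.extremePoints ℝ) (hab : a ≠ b) (hac : a ≠ c)
    (hbc : b ≠ c) (hx : x ∈ C) (hxa : x ≠ a) (hxb : x ≠ b) (hxc : x ≠ c) :
    ∀ᶠ r in 𝓝[>] (1 : ℝ), ∀ K : Set E, Convex ℝ K → homothety x r a ∈ K →
      homothety x r b ∈ K → homothety x r c ∈ K → a ∈ K ∨ b ∈ K ∨ c ∈ K := by
  have : FiniteDimensional ℝ E := .of_finrank_pos (by omega)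
  have hind := affineIndependent_of_mem_extremePoints ha hb hc hab hac hbc
  let B : AffineBasis (Fin 3) ℝ E :=
    ⟨![a, b, c], hind, hind.affineSpan_eq_top_iff_card_eq_finrank_add_one.2 (by simp [hE])⟩
  obtain ⟨i, hi⟩ := B.exists_forall_ne_coord_nonneg hC (fun j => by fin_cases j <;> assumption)
    hx (fun j => by fin_cases j <;> assumption)
  filter_upwards [B.eventually_mem_convexHull_image_homothety hi] with r hr K hK haK hbK hcK
  have hsub : homothety x r '' range B ⊆ K := by
    rintro _ ⟨_, ⟨j, rfl⟩, rfl⟩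
    fin_cases j <;> assumption
  have hBi : B i ∈ K := convexHull_min hsub hK hr
  fin_cases i
  exacts [.inl hBi, .inr (.inl hBi), .inr (.inr hBi)]

open Classical in
theorem eventually_card_filter_homothety_mem_le_two (hE : finrank ℝ E = 2) {C : Set E}
    (hC : Convex ℝ C) {P : Finset E} (hP : (P : Set E) ⊆ C.extremePoints ℝ) {x : E}
    (hx : x ∈ C) (hxP : ∀ p ∈ P, x ≠ p) :
    ∀ᶠ r in 𝓝[>] (1 : ℝ), ∀ K : Set E, Convex ℝ K → K ⊆ (P : Set E)ᶜ →
      #{p ∈ P | homothety x r p ∈ K} ≤ 2 := by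
  have htriple : ∀ᶠ r in 𝓝[>] (1 : ℝ), ∀ a ∈ P, ∀ b ∈ P, ∀ c ∈ P, a ≠ b → a ≠ c → b ≠ c →
      ∀ K : Set E, Convex ℝ K → homothety x r a ∈ K → homothety x r b ∈ K →
        homothety x r c ∈ K → a ∈ K ∨ b ∈ K ∨ c ∈ K := by
    simp only [eventually_all_finset, eventually_imp_distrib_left]
    intro a ha b hb c hc hab hac hbc
    exact eventually_mem_of_homothety_mem_of_mem_extremePoints hE hC (hP ha) (hP hb) (hP hc)
      hab hac hbc hx (hxP a ha) (hxP b hb) (hxP c hc)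
  filter_upwards [htriple] with r htriple K hK hKP
  by_contra! h
  obtain ⟨a, ha, b, hb, c, hc, hab, hac, hbc⟩ := two_lt_card.1 h
  simp only [mem_filter] at ha hb hc
  rcases htriple a ha.1 b hb.1 c hc.1 hab hac hbc K hK ha.2 hb.2 hc.2 with h | h | h
  exacts [hKP h ha.1, hKP h hb.1, hKP h hc.1]

theorem stmt_7_general (n : ℕ) (P : Finset (ℝ × ℝ)) (hcard : P.card = n)
    (hconvpos : (P : Set (ℝ × ℝ)) ⊆ (convexHull ℝ (P : Set (ℝ × ℝ))).extremePoints ℝ)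
    (𝒦 : Finset (Set (ℝ × ℝ)))
    (hconv : ∀ K ∈ 𝒦, Convex ℝ K)
    (hdisjP : ∀ K ∈ 𝒦, K ⊆ ((P : Set (ℝ × ℝ)))ᶜ)
    (henc : ∀ p ∈ P, ∃ N ∈ nhds p,
      (⋃₀ (𝒦 : Set (Set (ℝ × ℝ)))) ∩ N = N \ {p})
    (hx : ∃ x ∈ interior (convexHull ℝ (P : Set (ℝ × ℝ))),
      ∃ K₁ ∈ 𝒦, ∃ K₂ ∈ 𝒦, K₁ ≠ K₂ ∧ x ∈ K₁ ∧ x ∈ K₂) :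
    (n + 1) / 2 + 2 ≤ 𝒦.card := by
  classical
  obtain ⟨x, hxint, K₁, hK₁, K₂, hK₂, hK₁₂, hxK₁, hxK₂⟩ := hx
  have hxP : ∀ p ∈ P, x ≠ p := fun p hp =>
    (disjoint_interior_extremePoints _).ne_of_mem hxint (hconvpos hp)
  have hcover : ∀ p ∈ P, ∀ᶠ r in 𝓝[>] (1 : ℝ), homothety x r p ∈ ⋃₀ (𝒦 : Set (Set (ℝ × ℝ))) := by
    intro p hp
    obtain ⟨N, hN, hNK⟩ := henc p hp
    refine (tendsto_homothety_nhdsNE (hxP p hp)).mono_left (nhdsGT_le_nhdsNE 1) ?_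
    exact mem_nhdsWithin_iff_exists_mem_nhds_inter.2
      ⟨N, hN, by rw [← sdiff_eq, ← hNK]; exact inter_subset_left⟩
  obtain ⟨r, hr, hcovered, hfiber⟩ := (eventually_mem_nhdsWithin.and
    (((eventually_all_finset P).2 hcover).and (eventually_card_filter_homothety_mem_le_two
      (by simp) (convex_convexHull ℝ _) hconvpos (interior_subset hxint) hxP))).exists
  have hcount : #P * 1 ≤ #((𝒦.erase K₁).erase K₂) * 2 := by
    refine card_mul_le_card_mul (fun p K => homothety x r p ∈ K) (fun p hp => ?_) fun K hK => ?_
    · obtain ⟨K, hK, hpK⟩ := hcovered p hp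
      have hne : ∀ K' ∈ 𝒦, x ∈ K' → K ≠ K' := by
        rintro K' - hxK' rfl
        exact hdisjP K hK ((hconv K hK).mem_of_homothety_mem hr.le hxK' hpK) hp
      exact card_pos.2 ⟨K, mem_filter.2
        ⟨mem_erase.2 ⟨hne K₂ hK₂ hxK₂, mem_erase.2 ⟨hne K₁ hK₁ hxK₁, hK⟩⟩, hpK⟩⟩
    · have hK := mem_of_mem_erase (mem_of_mem_erase hK)
      exact hfiber K (hconv K hK) (hdisjP K hK)
  have hK₂' : K₂ ∈ 𝒦.erase K₁ := mem_erase.2 ⟨hK₁₂.symm, hK₂⟩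
  have h𝒦 := card_pos.2 ⟨K₂, hK₂'⟩
  rw [card_erase_of_mem hK₂', card_erase_of_mem hK₁] at hcount
  rw [card_erase_of_mem hK₁] at h𝒦
  omega

/-- If `n ≥ 5` points in convex position are encapsulated by a family `𝒦` of convex sets
and some point `x` of the interior of the convex hull lies in at least two members of `𝒦`,
then `|𝒦| ≥ ⌈n/2⌉ + 2`. -/
theorem stmt_7 (n : ℕ) (hn : 5 ≤ n) (P : Finset (ℝ × ℝ)) (hcard : P.card = n)
    (hconvpos : (P : Set (ℝ × ℝ)) ⊆ (convexHull ℝ (P : Set (ℝ × ℝ))).extremePoints ℝ)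
    (𝒦 : Finset (Set (ℝ × ℝ)))
    (hconv : ∀ K ∈ 𝒦, Convex ℝ K)
    (hdisjP : ∀ K ∈ 𝒦, K ⊆ ((P : Set (ℝ × ℝ)))ᶜ)
    (henc : ∀ p ∈ P, ∃ N ∈ nhds p,
      (⋃₀ (𝒦 : Set (Set (ℝ × ℝ)))) ∩ N = N \ {p})
    (hx : ∃ x ∈ interior (convexHull ℝ (P : Set (ℝ × ℝ))),
      ∃ K₁ ∈ 𝒦, ∃ K₂ ∈ 𝒦, K₁ ≠ K₂ ∧ x ∈ K₁ ∧ x ∈ K₂) :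
    (n + 1) / 2 + 2 ≤ 𝒦.card :=
  stmt_7_general n P hcard hconvpos 𝒦 hconv hdisjP henc hx
end

section
/- Let x be a point in the interior of the convex hull of points a₁,…,aₙ in convex position, and for each i let βᵢ be a point on the ray from x through aᵢ, strictly beyond aᵢ and sufficiently close to aᵢ. Then any convex set containing three of the points βᵢ must contain at least one of the points aⱼ. -/
open Set



-- extreme point differs from any interior point
lemma aux_extreme_ne_interior {s : Set (ℝ × ℝ)} {p q : ℝ × ℝ}
    (hp : p ∈ s.extremePoints ℝ) (hq : q ∈ interior s) : p ≠ q := by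
  rintro rfl
  obtain ⟨r, hr, hball⟩ := Metric.isOpen_iff.1 isOpen_interior p hq
  have hsub : Metric.ball p r ⊆ s := hball.trans interior_subset
  set d : ℝ × ℝ := (r/2, 0) with hd
  have hdy : p + d ∈ s := by
    apply hsub
    simp [Metric.mem_ball, dist_eq_norm, hd, Prod.norm_def, abs_of_pos, hr]
  have hdz : p - d ∈ s := by
    apply hsub
    simp [Metric.mem_ball, dist_eq_norm, hd, Prod.norm_def, abs_of_pos, hr]
  have hseg : p ∈ openSegment ℝ (p + d) (p - d) := by
    refine ⟨1/2, 1/2, by norm_num, by norm_num, by norm_num, ?_⟩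
    module
  have := (mem_extremePoints.1 hp).2 _ hdy _ hdz hseg
  have h2 : d = 0 := by
    have := this.1
    simpa [add_eq_left] using congrArg (· - p) this
  simp [hd, Prod.ext_iff] at h2
  linarith

-- lambda extraction
lemma aux_lam {x aᵢ βᵢ : ℝ × ℝ} (h : aᵢ ∈ openSegment ℝ x βᵢ) :
    ∃ lam : ℝ, 1 < lam ∧ βᵢ = x + lam • (aᵢ - x) := by
  obtain ⟨s, t, hs, ht, hst, heq⟩ := h
  refine ⟨1/t, ?_, ?_⟩
  · exact one_lt_one_div ht (by linarith)
  · have : aᵢ - x = t • (βᵢ - x) := by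
      have hs' : s = 1 - t := by linarith
      rw [hs'] at heq
      rw [← heq]; module
    rw [this, smul_smul, one_div, inv_mul_cancel₀ ht.ne', one_smul]
    module



-- combo lemma: convex combination of three ray points
lemma aux_combo {x v1 v2 v3 w : ℝ × ℝ} {l1 l2 l3 d1 d2 d3 : ℝ}
    (hl1 : 0 < l1) (hl2 : 0 < l2) (hl3 : 0 < l3)
    (hd1 : 0 ≤ d1) (hd2 : 0 ≤ d2) (hd3 : 0 ≤ d3)
    (hsum : d1 / l1 + d2 / l2 + d3 / l3 = 1)
    (hrel : d1 • v1 + d2 • v2 + d3 • v3 = w)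
    {C : Set (ℝ × ℝ)} (hC : Convex ℝ C)
    (h1 : x + l1 • v1 ∈ C) (h2 : x + l2 • v2 ∈ C) (h3 : x + l3 • v3 ∈ C) :
    x + w ∈ C := by
  have key := hC.sum_mem (t := (Finset.univ : Finset (Fin 3)))
    (w := ![d1 / l1, d2 / l2, d3 / l3]) (z := ![x + l1 • v1, x + l2 • v2, x + l3 • v3])
    (by intro i _; fin_cases i <;> simp <;> positivity)
    (by simp [Fin.sum_univ_three, hsum])
    (by intro i _; fin_cases i <;> simpa)
  rw [Fin.sum_univ_three] at key
  simp only [Matrix.cons_val_zero, Matrix.cons_val_one, Matrix.head_cons,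
    Matrix.cons_val_two, Matrix.tail_cons] at key
  have e1 : (d1 / l1) • (x + l1 • v1) = (d1 / l1) • x + d1 • v1 := by
    rw [smul_add, smul_smul, div_mul_cancel₀ _ hl1.ne']
  have e2 : (d2 / l2) • (x + l2 • v2) = (d2 / l2) • x + d2 • v2 := by
    rw [smul_add, smul_smul, div_mul_cancel₀ _ hl2.ne']
  have e3 : (d3 / l3) • (x + l3 • v3) = (d3 / l3) • x + d3 • v3 := by
    rw [smul_add, smul_smul, div_mul_cancel₀ _ hl3.ne']
  have heq : (d1 / l1) • (x + l1 • v1) + (d2 / l2) • (x + l2 • v2) + (d3 / l3) • (x + l3 • v3)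
      = (d1 / l1 + d2 / l2 + d3 / l3) • x + (d1 • v1 + d2 • v2 + d3 • v3) := by
    rw [e1, e2, e3]; module
  rw [heq, hsum, one_smul, hrel] at key
  exact key

-- membership of explicit combination in convex hull of three points: for sum_gt_one
lemma aux_sum_gt_one {S : Set (ℝ × ℝ)} {x am ap aq : ℝ × ℝ}
    (hxS : x ∈ convexHull ℝ S)
    (hpS : ap ∈ convexHull ℝ S) (hqS : aq ∈ convexHull ℝ S)
    (hm : am ∈ (convexHull ℝ S).extremePoints ℝ)
    (hne1 : am ≠ ap) (hne2 : am ≠ aq) (hne3 : am ≠ x)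
    {α γ : ℝ} (hα : 0 ≤ α) (hγ : 0 ≤ γ)
    (hrel : am - x = α • (ap - x) + γ • (aq - x)) : 1 < α + γ := by
  by_contra hle
  push_neg at hle
  -- am is a convex combination of ap, aq, x
  have hcomb : am = α • ap + γ • aq + (1 - α - γ) • x := by
    have := hrel
    have : am = x + (α • (ap - x) + γ • (aq - x)) := by rw [← hrel]; module
    rw [this]; module
  have hmem : am ∈ convexHull ℝ ({ap, aq, x} : Set (ℝ × ℝ)) := by
    have hc := (convex_convexHull ℝ ({ap, aq, x} : Set (ℝ × ℝ))).sum_mem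
      (t := (Finset.univ : Finset (Fin 3)))
      (w := ![α, γ, 1 - α - γ]) (z := ![ap, aq, x])
      (by intro i _; fin_cases i <;> simp <;> linarith)
      (by simp [Fin.sum_univ_three])
      (by intro i _; exact subset_convexHull ℝ _ (by fin_cases i <;> simp))
    rw [Fin.sum_univ_three] at hc
    simpa using hcomb ▸ hc
  -- am is extreme in the small hull
  have hsub : convexHull ℝ ({ap, aq, x} : Set (ℝ × ℝ)) ⊆ convexHull ℝ S :=
    convexHull_min (by rintro y (rfl | rfl | rfl) <;> assumption) (convex_convexHull ℝ S)
  have hext : am ∈ (convexHull ℝ ({ap, aq, x} : Set (ℝ × ℝ))).extremePoints ℝ := by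
    refine mem_extremePoints.2 ⟨hmem, fun y hy z hz hseg => ?_⟩
    exact (mem_extremePoints.1 hm).2 y (hsub hy) z (hsub hz) hseg
  have := extremePoints_convexHull_subset hext
  rcases this with h | h | h
  · exact hne1 h
  · exact hne2 h
  · exact hne3 h



lemma aux_keyA {x v1 v2 v3 : ℝ × ℝ} {c1 c2 c3 l1 l2 l3 : ℝ}
    (hc1 : 0 ≤ c1) (hc2 : 0 ≤ c2) (hc3 : 0 ≤ c3) (hcs : 0 < c1 + c2 + c3)
    (hrel : c1 • v1 + c2 • v2 + c3 • v3 = 0)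
    (hl1 : 1 < l1) (hl2 : 1 < l2) (hl3 : 1 < l3)
    {C : Set (ℝ × ℝ)} (hC : Convex ℝ C)
    (h1 : x + l1 • v1 ∈ C) (h2 : x + l2 • v2 ∈ C) (h3 : x + l3 • v3 ∈ C) :
    x + v1 ∈ C := by
  have hl1' : (0:ℝ) < l1 := by linarith
  have hl2' : (0:ℝ) < l2 := by linarith
  have hl3' : (0:ℝ) < l3 := by linarith
  set Q : ℝ := c1 / l1 + c2 / l2 + c3 / l3 with hQ
  have ht1 : 0 ≤ c1 / l1 := div_nonneg hc1 hl1'.le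
  have ht2 : 0 ≤ c2 / l2 := div_nonneg hc2 hl2'.le
  have ht3 : 0 ≤ c3 / l3 := div_nonneg hc3 hl3'.le
  have hQpos : 0 < Q := by
    have : 0 < c1 ∨ 0 < c2 ∨ 0 < c3 := by
      by_contra h; push_neg at h; linarith [h.1, h.2.1, h.2.2]
    rcases this with h | h | h
    · have := div_pos h hl1'; rw [hQ]; linarith
    · have := div_pos h hl2'; rw [hQ]; linarith
    · have := div_pos h hl3'; rw [hQ]; linarith
  set s : ℝ := (1 - 1 / l1) / Q with hs
  have h1l1 : 1 / l1 < 1 := by rw [div_lt_one hl1']; exact hl1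
  have hs0 : 0 ≤ s := div_nonneg (by linarith) hQpos.le
  have hsQ : s * Q = 1 - 1 / l1 := div_mul_cancel₀ _ hQpos.ne'
  refine aux_combo (d1 := 1 + s * c1) (d2 := s * c2) (d3 := s * c3)
    hl1' hl2' hl3' (by positivity) (by positivity) (by positivity) ?_ ?_ hC h1 h2 h3
  · have expand : (1 + s * c1) / l1 + s * c2 / l2 + s * c3 / l3
        = 1 / l1 + s * (c1 / l1 + c2 / l2 + c3 / l3) := by ring
    rw [expand, ← hQ, hsQ]; ring
  · have : (1 + s * c1) • v1 + (s * c2) • v2 + (s * c3) • v3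
        = v1 + s • (c1 • v1 + c2 • v2 + c3 • v3) := by module
    rw [this, hrel, smul_zero, add_zero]



lemma aux_keyB {S : Set (ℝ × ℝ)} {x am ap aq : ℝ × ℝ}
    (hxS : x ∈ convexHull ℝ S)
    (hpS : ap ∈ convexHull ℝ S) (hqS : aq ∈ convexHull ℝ S)
    (hm : am ∈ (convexHull ℝ S).extremePoints ℝ)
    (hne1 : am ≠ ap) (hne2 : am ≠ aq) (hne3 : am ≠ x) (hpx : ap ≠ x) (hqx : aq ≠ x)
    {cm cp cq : ℝ} (hcm : cm < 0) (hcp : 0 ≤ cp) (hcq : 0 ≤ cq)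
    (hc : cm • (am - x) + cp • (ap - x) + cq • (aq - x) = 0) :
    ∃ ε > (0:ℝ), ∀ βm βp βq : ℝ × ℝ,
      am ∈ openSegment ℝ x βm →
      ap ∈ openSegment ℝ x βp → dist βp ap < ε →
      aq ∈ openSegment ℝ x βq → dist βq aq < ε →
      ∀ C : Set (ℝ × ℝ), Convex ℝ C → βm ∈ C → βp ∈ C → βq ∈ C → am ∈ C := by
  have hcm' : (0:ℝ) < -cm := by linarith
  set α : ℝ := (-cm)⁻¹ * cp with hαdef
  set γ : ℝ := (-cm)⁻¹ * cq with hγdef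
  have hα : 0 ≤ α := mul_nonneg (by positivity) hcp
  have hγ : 0 ≤ γ := mul_nonneg (by positivity) hcq
  have hrel : am - x = α • (ap - x) + γ • (aq - x) := by
    have e : (-cm) • (am - x) - (cp • (ap - x) + cq • (aq - x))
        = -(cm • (am - x) + cp • (ap - x) + cq • (aq - x)) := by module
    rw [hc, neg_zero] at e
    have e2 : (-cm) • (am - x) = cp • (ap - x) + cq • (aq - x) := sub_eq_zero.mp e
    have : am - x = (-cm)⁻¹ • ((-cm) • (am - x)) := by
      rw [smul_smul, inv_mul_cancel₀ hcm'.ne', one_smul]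
    rw [this, e2, smul_add, smul_smul, smul_smul]
  have hsum1 : 1 < α + γ := aux_sum_gt_one hxS hpS hqS hm hne1 hne2 hne3 hα hγ hrel
  have hnp : (0:ℝ) < ‖ap - x‖ := norm_pos_iff.2 (sub_ne_zero.2 hpx)
  have hnq : (0:ℝ) < ‖aq - x‖ := norm_pos_iff.2 (sub_ne_zero.2 hqx)
  refine ⟨min ‖ap - x‖ ‖aq - x‖ * (α + γ - 1), mul_pos (lt_min hnp hnq) (by linarith), ?_⟩
  intro βm βp βq hsm hsp hdp hsq hdq C hC hmC hpC hqC
  obtain ⟨lm, hlm, hβm⟩ := aux_lam hsm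
  obtain ⟨lp, hlp, hβp⟩ := aux_lam hsp
  obtain ⟨lq, hlq, hβq⟩ := aux_lam hsq
  -- bounds on lp, lq
  have hbp : lp ≤ α + γ := by
    have e : βp - ap = (lp - 1) • (ap - x) := by rw [hβp]; module
    have : dist βp ap = (lp - 1) * ‖ap - x‖ := by
      rw [dist_eq_norm, e, norm_smul, Real.norm_eq_abs, abs_of_pos (by linarith)]
    rw [this] at hdp
    have h2 : min ‖ap - x‖ ‖aq - x‖ * (α + γ - 1) ≤ ‖ap - x‖ * (α + γ - 1) :=
      mul_le_mul_of_nonneg_right (min_le_left _ _) (by linarith)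
    have h3 : (lp - 1) * ‖ap - x‖ < ‖ap - x‖ * (α + γ - 1) := lt_of_lt_of_le hdp h2
    nlinarith
  have hbq : lq ≤ α + γ := by
    have e : βq - aq = (lq - 1) • (aq - x) := by rw [hβq]; module
    have : dist βq aq = (lq - 1) * ‖aq - x‖ := by
      rw [dist_eq_norm, e, norm_smul, Real.norm_eq_abs, abs_of_pos (by linarith)]
    rw [this] at hdq
    have h2 : min ‖ap - x‖ ‖aq - x‖ * (α + γ - 1) ≤ ‖aq - x‖ * (α + γ - 1) :=
      mul_le_mul_of_nonneg_right (min_le_right _ _) (by linarith)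
    have h3 : (lq - 1) * ‖aq - x‖ < ‖aq - x‖ * (α + γ - 1) := lt_of_lt_of_le hdq h2
    nlinarith
  have hlp' : (0:ℝ) < lp := by linarith
  have hlq' : (0:ℝ) < lq := by linarith
  have hlm' : (0:ℝ) < lm := by linarith
  have hA : 1 ≤ α / lp + γ / lq := by
    have e : α / (α + γ) + γ / (α + γ) = 1 := by field_simp
    have h1 : α / (α + γ) ≤ α / lp := by gcongr
    have h2 : γ / (α + γ) ≤ γ / lq := by gcongr
    linarith
  have h1lm : 1 / lm < 1 := by rw [div_lt_one hlm']; exact hlm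
  have hden : 0 < α / lp + γ / lq - 1 / lm := by linarith
  set s : ℝ := (1 - 1 / lm) / (α / lp + γ / lq - 1 / lm) with hsdef
  have hs0 : 0 ≤ s := div_nonneg (by linarith) hden.le
  have hs1 : s ≤ 1 := (div_le_one hden).2 (by linarith)
  have hsA : s * (α / lp + γ / lq - 1 / lm) = 1 - 1 / lm := div_mul_cancel₀ _ hden.ne'
  rw [hβm] at hmC; rw [hβp] at hpC; rw [hβq] at hqC
  have final : x + (am - x) ∈ C := by
    refine aux_combo (d1 := 1 - s) (d2 := s * α) (d3 := s * γ)
      hlm' hlp' hlq' (by linarith) (by positivity) (by positivity) ?_ ?_ hC hmC hpC hqC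
    · have expand : (1 - s) / lm + s * α / lp + s * γ / lq
          = 1 / lm + s * (α / lp + γ / lq - 1 / lm) := by ring
      rw [expand, hsA]; ring
    · have e : (1 - s) • (am - x) + (s * α) • (ap - x) + (s * γ) • (aq - x)
          = (am - x) + s • ((α • (ap - x) + γ • (aq - x)) - (am - x)) := by module
      rw [e, ← hrel, sub_self, smul_zero, add_zero]
  simpa using final



lemma aux_key {n : ℕ} (a : Fin n → ℝ × ℝ) (hinj : Function.Injective a)
    (hconvpos : ∀ i, a i ∈ (convexHull ℝ (Set.range a)).extremePoints ℝ)
    (x : ℝ × ℝ) (hx : x ∈ interior (convexHull ℝ (Set.range a)))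
    (i j k : Fin n) (hij : i ≠ j) (hik : i ≠ k) (hjk : j ≠ k) :
    ∃ ε > (0:ℝ), ∀ β : Fin n → ℝ × ℝ,
      (∀ t, a t ∈ openSegment ℝ x (β t) ∧ dist (β t) (a t) < ε) →
      ∀ C : Set (ℝ × ℝ), Convex ℝ C →
        β i ∈ C → β j ∈ C → β k ∈ C → ∃ l, a l ∈ C := by
  have hxS : x ∈ convexHull ℝ (Set.range a) := interior_subset hx
  have haS : ∀ t, a t ∈ convexHull ℝ (Set.range a) :=
    fun t => subset_convexHull ℝ _ ⟨t, rfl⟩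
  have hax : ∀ t, a t ≠ x := fun t => aux_extreme_ne_interior (hconvpos t) hx
  -- linear dependence of the three vectors
  have hdep : ¬ LinearIndependent ℝ ![a i - x, a j - x, a k - x] := by
    intro h
    have hcard := h.fintype_card_le_finrank
    rw [Fintype.card_fin, Module.finrank_prod, Module.finrank_self] at hcard
    omega
  obtain ⟨g, hg0, t, hgt⟩ := Fintype.not_linearIndependent_iff.1 hdep
  set c0 : ℝ := g 0 with hc0
  set c1 : ℝ := g 1 with hc1
  set c2 : ℝ := g 2 with hc2
  have hrel : c0 • (a i - x) + c1 • (a j - x) + c2 • (a k - x) = 0 := by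
    have := hg0
    rw [Fin.sum_univ_three] at this
    simpa using this
  have hne : c0 ≠ 0 ∨ c1 ≠ 0 ∨ c2 ≠ 0 := by
    fin_cases t
    · exact Or.inl hgt
    · exact Or.inr (Or.inl hgt)
    · exact Or.inr (Or.inr hgt)
  have hrelneg : (-c0) • (a i - x) + (-c1) • (a j - x) + (-c2) • (a k - x) = 0 := by
    have e : (-c0) • (a i - x) + (-c1) • (a j - x) + (-c2) • (a k - x)
        = -(c0 • (a i - x) + c1 • (a j - x) + c2 • (a k - x)) := by module
    rw [e, hrel, neg_zero]
  -- case A helper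
  have ACASE : ∀ p q r : Fin n, ∀ cp cq cr : ℝ, 0 ≤ cp → 0 ≤ cq → 0 ≤ cr →
      0 < cp + cq + cr →
      (cp • (a p - x) + cq • (a q - x) + cr • (a r - x) = 0) →
      ∃ ε > (0:ℝ), ∀ β : Fin n → ℝ × ℝ,
        (∀ t, a t ∈ openSegment ℝ x (β t) ∧ dist (β t) (a t) < ε) →
        ∀ C : Set (ℝ × ℝ), Convex ℝ C → β p ∈ C → β q ∈ C → β r ∈ C → a p ∈ C := by
    intro p q r cp cq cr h1 h2 h3 hs hrel'
    refine ⟨1, one_pos, ?_⟩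
    intro β hβ C hC hp hq hr
    obtain ⟨lp, hlp, ep⟩ := aux_lam (hβ p).1
    obtain ⟨lq, hlq, eq'⟩ := aux_lam (hβ q).1
    obtain ⟨lr, hlr, er⟩ := aux_lam (hβ r).1
    rw [ep] at hp; rw [eq'] at hq; rw [er] at hr
    have := aux_keyA h1 h2 h3 hs hrel' hlp hlq hlr hC hp hq hr
    simpa using this
  -- case B helper
  have BCASE : ∀ m p q : Fin n, m ≠ p → m ≠ q → ∀ dm dp dq : ℝ, dm < 0 → 0 ≤ dp → 0 ≤ dq →
      (dm • (a m - x) + dp • (a p - x) + dq • (a q - x) = 0) →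
      ∃ ε > (0:ℝ), ∀ β : Fin n → ℝ × ℝ,
        (∀ t, a t ∈ openSegment ℝ x (β t) ∧ dist (β t) (a t) < ε) →
        ∀ C : Set (ℝ × ℝ), Convex ℝ C → β m ∈ C → β p ∈ C → β q ∈ C → a m ∈ C := by
    intro m p q hmp hmq dm dp dq h1 h2 h3 hrel'
    obtain ⟨ε, hε, H⟩ := aux_keyB hxS (haS p) (haS q) (hconvpos m)
      (fun h => hmp (hinj h)) (fun h => hmq (hinj h)) (hax m) (hax p) (hax q)
      h1 h2 h3 hrel'
    exact ⟨ε, hε, fun β hβ C hC hm hp hq =>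
      H (β m) (β p) (β q) (hβ m).1 (hβ p).1 (hβ p).2 (hβ q).1 (hβ q).2 C hC hm hp hq⟩
  rcases le_or_gt 0 c0 with h0 | h0
  · rcases le_or_gt 0 c1 with h1 | h1
    · rcases le_or_gt 0 c2 with h2 | h2
      · -- all nonneg
        have hs : 0 < c0 + c1 + c2 := by
          rcases hne with h | h | h
          · have := lt_of_le_of_ne h0 (Ne.symm h); linarith
          · have := lt_of_le_of_ne h1 (Ne.symm h); linarith
          · have := lt_of_le_of_ne h2 (Ne.symm h); linarith
        obtain ⟨ε, hε, H⟩ := ACASE i j k c0 c1 c2 h0 h1 h2 hs hrel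
        exact ⟨ε, hε, fun β hβ C hC hiC hjC hkC => ⟨i, H β hβ C hC hiC hjC hkC⟩⟩
      · -- c2 < 0
        have hrel' : c2 • (a k - x) + c0 • (a i - x) + c1 • (a j - x) = 0 := by
          rw [← hrel]; module
        obtain ⟨ε, hε, H⟩ := BCASE k i j hik.symm hjk.symm c2 c0 c1 h2 h0 h1 hrel'
        exact ⟨ε, hε, fun β hβ C hC hiC hjC hkC => ⟨k, H β hβ C hC hkC hiC hjC⟩⟩
    · rcases le_or_gt 0 c2 with h2 | h2
      · -- c1 < 0
        have hrel' : c1 • (a j - x) + c0 • (a i - x) + c2 • (a k - x) = 0 := by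
          rw [← hrel]; module
        obtain ⟨ε, hε, H⟩ := BCASE j i k hij.symm hjk c1 c0 c2 h1 h0 h2 hrel'
        exact ⟨ε, hε, fun β hβ C hC hiC hjC hkC => ⟨j, H β hβ C hC hjC hiC hkC⟩⟩
      · -- c1 < 0, c2 < 0, c0 ≥ 0
        rcases h0.lt_or_eq with hpos | heq
        · obtain ⟨ε, hε, H⟩ := BCASE i j k hij hik (-c0) (-c1) (-c2)
            (by linarith) (by linarith) (by linarith) hrelneg
          exact ⟨ε, hε, fun β hβ C hC hiC hjC hkC => ⟨i, H β hβ C hC hiC hjC hkC⟩⟩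
        · obtain ⟨ε, hε, H⟩ := ACASE i j k (-c0) (-c1) (-c2)
            (by linarith) (by linarith) (by linarith) (by linarith) hrelneg
          exact ⟨ε, hε, fun β hβ C hC hiC hjC hkC => ⟨i, H β hβ C hC hiC hjC hkC⟩⟩
  · rcases le_or_gt 0 c1 with h1 | h1
    · rcases le_or_gt 0 c2 with h2 | h2
      · -- c0 < 0
        obtain ⟨ε, hε, H⟩ := BCASE i j k hij hik c0 c1 c2 h0 h1 h2 hrel
        exact ⟨ε, hε, fun β hβ C hC hiC hjC hkC => ⟨i, H β hβ C hC hiC hjC hkC⟩⟩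
      · -- c0 < 0, c1 ≥ 0, c2 < 0
        rcases h1.lt_or_eq with hpos | heq
        · have hrel' : (-c1) • (a j - x) + (-c0) • (a i - x) + (-c2) • (a k - x) = 0 := by
            rw [← hrelneg]; module
          obtain ⟨ε, hε, H⟩ := BCASE j i k hij.symm hjk (-c1) (-c0) (-c2)
            (by linarith) (by linarith) (by linarith) hrel'
          exact ⟨ε, hε, fun β hβ C hC hiC hjC hkC => ⟨j, H β hβ C hC hjC hiC hkC⟩⟩
        · obtain ⟨ε, hε, H⟩ := ACASE i j k (-c0) (-c1) (-c2)
            (by linarith) (by linarith) (by linarith) (by linarith) hrelneg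
          exact ⟨ε, hε, fun β hβ C hC hiC hjC hkC => ⟨i, H β hβ C hC hiC hjC hkC⟩⟩
    · rcases le_or_gt 0 c2 with h2 | h2
      · -- c0 < 0, c1 < 0, c2 ≥ 0
        rcases h2.lt_or_eq with hpos | heq
        · have hrel' : (-c2) • (a k - x) + (-c0) • (a i - x) + (-c1) • (a j - x) = 0 := by
            rw [← hrelneg]; module
          obtain ⟨ε, hε, H⟩ := BCASE k i j hik.symm hjk.symm (-c2) (-c0) (-c1)
            (by linarith) (by linarith) (by linarith) hrel'
          exact ⟨ε, hε, fun β hβ C hC hiC hjC hkC => ⟨k, H β hβ C hC hkC hiC hjC⟩⟩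
        · obtain ⟨ε, hε, H⟩ := ACASE i j k (-c0) (-c1) (-c2)
            (by linarith) (by linarith) (by linarith) (by linarith) hrelneg
          exact ⟨ε, hε, fun β hβ C hC hiC hjC hkC => ⟨i, H β hβ C hC hiC hjC hkC⟩⟩
      · -- all negative
        obtain ⟨ε, hε, H⟩ := ACASE i j k (-c0) (-c1) (-c2)
          (by linarith) (by linarith) (by linarith) (by linarith) hrelneg
        exact ⟨ε, hε, fun β hβ C hC hiC hjC hkC => ⟨i, H β hβ C hC hiC hjC hkC⟩⟩



/-- For points `βᵢ` placed beyond each `aᵢ` on the ray from `x` through `aᵢ`,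
sufficiently close to `aᵢ`, any convex set containing three of the `βᵢ`'s contains
some `aⱼ`. -/
theorem stmt_8 (n : ℕ) (a : Fin n → ℝ × ℝ) (hinj : Function.Injective a)
    (hconvpos : ∀ i, a i ∈ (convexHull ℝ (Set.range a)).extremePoints ℝ)
    (x : ℝ × ℝ) (hx : x ∈ interior (convexHull ℝ (Set.range a))) :
    ∃ ε > (0 : ℝ), ∀ β : Fin n → ℝ × ℝ,
      (∀ i, a i ∈ openSegment ℝ x (β i) ∧
        dist (β i) (a i) < ε) →
      ∀ C : Set (ℝ × ℝ), Convex ℝ C →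
        ∀ i j k : Fin n, i ≠ j → i ≠ k → j ≠ k →
          β i ∈ C → β j ∈ C → β k ∈ C → ∃ l, a l ∈ C := by
  have hn : Nonempty (Fin n) := by
    rcases Nat.eq_zero_or_pos n with h | h
    · subst h
      rw [Set.range_eq_empty, convexHull_empty, interior_empty] at hx
      exact absurd hx (Set.notMem_empty x)
    · exact ⟨⟨0, h⟩⟩
  have KEY : ∀ p : Fin n × Fin n × Fin n, ∃ ε > (0:ℝ), ∀ β : Fin n → ℝ × ℝ,
      (∀ t, a t ∈ openSegment ℝ x (β t) ∧ dist (β t) (a t) < ε) →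
      ∀ C : Set (ℝ × ℝ), Convex ℝ C → p.1 ≠ p.2.1 → p.1 ≠ p.2.2 → p.2.1 ≠ p.2.2 →
        β p.1 ∈ C → β p.2.1 ∈ C → β p.2.2 ∈ C → ∃ l, a l ∈ C := by
    intro p
    by_cases hd : p.1 ≠ p.2.1 ∧ p.1 ≠ p.2.2 ∧ p.2.1 ≠ p.2.2
    · obtain ⟨ε, hε, H⟩ := aux_key a hinj hconvpos x hx p.1 p.2.1 p.2.2 hd.1 hd.2.1 hd.2.2
      exact ⟨ε, hε, fun β hβ C hC _ _ _ h1 h2 h3 => H β hβ C hC h1 h2 h3⟩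
    · exact ⟨1, one_pos, fun β hβ C hC hd1 hd2 hd3 _ _ _ => absurd ⟨hd1, hd2, hd3⟩ hd⟩
  choose F hF0 hF using KEY
  haveI : Nonempty (Fin n × Fin n × Fin n) := by infer_instance
  refine ⟨Finset.univ.inf' Finset.univ_nonempty F, ?_, ?_⟩
  · rw [gt_iff_lt, Finset.lt_inf'_iff]
    intro p _
    exact hF0 p
  · intro β hβ C hC i j k hij hik hjk hi hj hk
    have hle : Finset.univ.inf' Finset.univ_nonempty F ≤ F (i, j, k) :=
      Finset.inf'_le _ (Finset.mem_univ _)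
    exact hF (i, j, k) β (fun t => ⟨(hβ t).1, lt_of_lt_of_le (hβ t).2 hle⟩)
      C hC hij hik hjk hi hj hk
end

section
/- Suppose a finite point set P in convex position is encapsulated by pairwise disjoint convex sets K₁,…,Kₜ, and suppose for some i ≠ j the union touch(Kᵢ) ∪ touch(Kⱼ) has at most 3 elements, where the claimed lower bound f(m) = ⌊(2m+5)/3⌋ holds for all point sets in convex position of size < |P|. Then t ≥ f(|P|). -/
/-- Induction step: if the bound `⌊(2m+5)/3⌋` holds for all smaller convex-position sets,
and a convex-position set `P` is encapsulated by pairwise disjoint convex sets among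
which two sets `K₁ ≠ K₂` together touch at most 3 points of `P`, then the family has at
least `⌊(2|P|+5)/3⌋` members.  Here `touch(K) = P ∩ (cl K \ K)`. -/
theorem stmt_12 (P : Finset (ℝ × ℝ))
    (hconvpos : (P : Set (ℝ × ℝ)) ⊆ (convexHull ℝ (P : Set (ℝ × ℝ))).extremePoints ℝ)
    (IH : ∀ Q : Finset (ℝ × ℝ), Q.card < P.card →
      ((Q : Set (ℝ × ℝ)) ⊆ (convexHull ℝ (Q : Set (ℝ × ℝ))).extremePoints ℝ) →
      ∀ 𝒦' : Finset (Set (ℝ × ℝ)),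
        (∀ K ∈ 𝒦', Convex ℝ K) →
        (∀ K ∈ 𝒦', K ⊆ ((Q : Set (ℝ × ℝ)))ᶜ) →
        (∀ K₁ ∈ 𝒦', ∀ K₂ ∈ 𝒦', K₁ ≠ K₂ → Disjoint K₁ K₂) →
        (∀ p ∈ Q, ∃ N ∈ nhds p,
          (⋃₀ (𝒦' : Set (Set (ℝ × ℝ)))) ∩ N = N \ {p}) →
        (2 * Q.card + 5) / 3 ≤ 𝒦'.card)
    (𝒦 : Finset (Set (ℝ × ℝ)))
    (hconv : ∀ K ∈ 𝒦, Convex ℝ K)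
    (hdisjP : ∀ K ∈ 𝒦, K ⊆ ((P : Set (ℝ × ℝ)))ᶜ)
    (hpairwise : ∀ K₁ ∈ 𝒦, ∀ K₂ ∈ 𝒦, K₁ ≠ K₂ → Disjoint K₁ K₂)
    (henc : ∀ p ∈ P, ∃ N ∈ nhds p,
      (⋃₀ (𝒦 : Set (Set (ℝ × ℝ)))) ∩ N = N \ {p})
    (htouch : ∃ K₁ ∈ 𝒦, ∃ K₂ ∈ 𝒦, K₁ ≠ K₂ ∧
      (((P : Set (ℝ × ℝ)) ∩ (closure K₁ \ K₁)) ∪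
        ((P : Set (ℝ × ℝ)) ∩ (closure K₂ \ K₂))).ncard ≤ 3) :
    (2 * P.card + 5) / 3 ≤ 𝒦.card := by
  classical
  obtain ⟨K₁, hK₁, K₂, hK₂, hne, hcard3⟩ := htouch
  have h2card : 2 ≤ 𝒦.card := Finset.one_lt_card.mpr ⟨K₁, hK₁, K₂, hK₂, hne⟩
  rcases P.eq_empty_or_nonempty with hP | hP
  · subst hP; simp only [Finset.card_empty]; omega
  -- the touch set as a Finset
  set Tf : Finset (ℝ × ℝ) :=
    P.filter (fun p => p ∈ closure K₁ \ K₁ ∨ p ∈ closure K₂ \ K₂) with hTf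
  have hTfcoe : (Tf : Set (ℝ × ℝ)) =
      ((P : Set (ℝ × ℝ)) ∩ (closure K₁ \ K₁)) ∪
        ((P : Set (ℝ × ℝ)) ∩ (closure K₂ \ K₂)) := by
    ext p
    simp [hTf, Finset.mem_filter, and_or_left]
  have hTf3 : Tf.card ≤ 3 := by
    have := Set.ncard_coe_finset Tf
    rw [hTfcoe] at this
    omega
  -- choose S : nonempty, ≤ 3 points, contains Tf, inside P
  obtain ⟨S, hSP, hSne, hS3, hTS⟩ :
      ∃ S : Finset (ℝ × ℝ), S ⊆ P ∧ S.Nonempty ∧ S.card ≤ 3 ∧ Tf ⊆ S := by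
    by_cases h : Tf.Nonempty
    · exact ⟨Tf, Finset.filter_subset _ _, h, hTf3, Finset.Subset.refl _⟩
    · obtain ⟨p₀, hp₀⟩ := hP
      refine ⟨{p₀}, by simpa using hp₀, ⟨p₀, by simp⟩, by simp, ?_⟩
      rw [Finset.not_nonempty_iff_eq_empty] at h
      simp [h]
  set Q : Finset (ℝ × ℝ) := P \ S with hQ
  have hQP : Q ⊆ P := Finset.sdiff_subset
  have hQcard : Q.card = P.card - S.card := Finset.card_sdiff_of_subset hSP
  have hSle : S.card ≤ P.card := Finset.card_le_card hSP
  have hQlt : Q.card < P.card := by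
    have := hSne.card_pos; omega
  -- Q is in convex position
  have hQconv : (Q : Set (ℝ × ℝ)) ⊆ (convexHull ℝ (Q : Set (ℝ × ℝ))).extremePoints ℝ := by
    intro x hx
    have hxP := hconvpos (Set.mem_of_mem_of_subset hx (by exact_mod_cast hQP))
    rw [mem_extremePoints] at hxP ⊢
    have hsub : convexHull ℝ (Q : Set (ℝ × ℝ)) ⊆ convexHull ℝ (P : Set (ℝ × ℝ)) :=
      convexHull_mono (by exact_mod_cast hQP)
    exact ⟨subset_convexHull ℝ _ hx, fun x₁ h₁ x₂ h₂ hseg =>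
      hxP.2 x₁ (hsub h₁) x₂ (hsub h₂) hseg⟩
  set 𝒦' : Finset (Set (ℝ × ℝ)) := (𝒦.erase K₁).erase K₂ with h𝒦'
  have h𝒦'sub : 𝒦' ⊆ 𝒦 := (Finset.erase_subset _ _).trans (Finset.erase_subset _ _)
  have h𝒦'card : 𝒦'.card = 𝒦.card - 2 := by
    rw [h𝒦', Finset.card_erase_of_mem (Finset.mem_erase.mpr ⟨hne.symm, hK₂⟩),
      Finset.card_erase_of_mem hK₁]
    omega
  -- points of Q avoid closures of K₁ K₂
  have havoid : ∀ p ∈ Q, p ∉ closure K₁ ∧ p ∉ closure K₂ := by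
    intro p hp
    obtain ⟨hpP, hpS⟩ := Finset.mem_sdiff.mp hp
    have hpT : p ∉ Tf := fun h => hpS (hTS h)
    have hpfilter : ¬(p ∈ closure K₁ \ K₁ ∨ p ∈ closure K₂ \ K₂) :=
      fun h => hpT (Finset.mem_filter.mpr ⟨hpP, h⟩)
    have h1 : p ∉ K₁ := fun h => (hdisjP K₁ hK₁ h) (by exact_mod_cast hpP)
    have h2 : p ∉ K₂ := fun h => (hdisjP K₂ hK₂ h) (by exact_mod_cast hpP)
    exact ⟨fun h => hpfilter (Or.inl ⟨h, h1⟩), fun h => hpfilter (Or.inr ⟨h, h2⟩)⟩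
  have key := IH Q hQlt hQconv 𝒦' (fun K hK => hconv K (h𝒦'sub hK))
    (fun K hK => (hdisjP K (h𝒦'sub hK)).trans
      (Set.compl_subset_compl.mpr (by exact_mod_cast hQP)))
    (fun A hA B hB hAB => hpairwise A (h𝒦'sub hA) B (h𝒦'sub hB) hAB)
    ?_
  · omega
  · intro p hp
    obtain ⟨h1, h2⟩ := havoid p hp
    obtain ⟨N, hN, hNeq⟩ := henc p (hQP hp)
    refine ⟨N ∩ (closure K₁)ᶜ ∩ (closure K₂)ᶜ, ?_, ?_⟩
    · exact Filter.inter_mem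
        (Filter.inter_mem hN (isClosed_closure.isOpen_compl.mem_nhds h1))
        (isClosed_closure.isOpen_compl.mem_nhds h2)
    · ext x
      constructor
      · rintro ⟨⟨K, hK, hxK⟩, hxN⟩
        have hx𝒦 : x ∈ ⋃₀ (𝒦 : Set (Set (ℝ × ℝ))) :=
          ⟨K, by exact_mod_cast h𝒦'sub (by exact_mod_cast hK), hxK⟩
        have : x ∈ N \ {p} := hNeq ▸ ⟨hx𝒦, hxN.1.1⟩
        exact ⟨hxN, this.2⟩
      · rintro ⟨hxN, hxp⟩
        have : x ∈ ⋃₀ (𝒦 : Set (Set (ℝ × ℝ))) ∩ N := by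
          rw [hNeq]; exact ⟨hxN.1.1, hxp⟩
        obtain ⟨⟨K, hK, hxK⟩, -⟩ := this
        have hK𝒦 : K ∈ 𝒦 := by exact_mod_cast hK
        have hne1 : K ≠ K₁ := by
          rintro rfl; exact hxN.1.2 (subset_closure hxK)
        have hne2 : K ≠ K₂ := by
          rintro rfl; exact hxN.2 (subset_closure hxK)
        exact ⟨⟨K, by
          exact_mod_cast Finset.mem_erase.mpr ⟨hne2, Finset.mem_erase.mpr ⟨hne1, hK𝒦⟩⟩,
          hxK⟩, hxN⟩
end

section
/- Let K be an integer ≥ 2 and let P = {(m,k) ∈ ℤ² : 1 ≤ m,k ≤ K, not both m and k even}. Then any family of convex subsets of ℝ² \ P covering ℝ² \ P has at least (K/2)² members, because no convex subset of ℝ² \ P contains two distinct points of the form (2ℓ, 2k) with 1 ≤ 2ℓ, 2k ≤ K. -/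
lemma midpt (l₁ k₁ l₂ k₂ : ℤ) :
    (1/2 : ℝ) • (((2 * l₁ : ℤ) : ℝ), ((2 * k₁ : ℤ) : ℝ))
      + (1/2 : ℝ) • (((2 * l₂ : ℤ) : ℝ), ((2 * k₂ : ℤ) : ℝ))
    = (((l₁ + l₂ : ℤ) : ℝ), ((k₁ + k₂ : ℤ) : ℝ)) := by
  simp [Prod.ext_iff, Prod.smul_mk]

lemma aux_key_s17 (K : ℤ) (C : Set (ℝ × ℝ)) (hC : Convex ℝ C)
    (hP : ∀ m k : ℤ, 1 ≤ m → m ≤ K → 1 ≤ k → k ≤ K → ¬ (Even m ∧ Even k) →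
      ((m : ℝ), (k : ℝ)) ∉ C) :
    ∀ N : ℕ, ∀ l₁ k₁ l₂ k₂ : ℤ, (l₁ - l₂).natAbs + (k₁ - k₂).natAbs ≤ N →
      1 ≤ 2 * l₁ → 2 * l₁ ≤ K → 1 ≤ 2 * k₁ → 2 * k₁ ≤ K →
      1 ≤ 2 * l₂ → 2 * l₂ ≤ K → 1 ≤ 2 * k₂ → 2 * k₂ ≤ K →
      (l₁, k₁) ≠ (l₂, k₂) →
      ¬ ((((2 * l₁ : ℤ) : ℝ), ((2 * k₁ : ℤ) : ℝ)) ∈ C ∧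
         (((2 * l₂ : ℤ) : ℝ), ((2 * k₂ : ℤ) : ℝ)) ∈ C) := by
  intro N
  induction N using Nat.strong_induction_on with
  | _ N ih =>
    intro l₁ k₁ l₂ k₂ hN h1 h2 h3 h4 h5 h6 h7 h8 hne ⟨hm1, hm2⟩
    have hmid : (((l₁ + l₂ : ℤ) : ℝ), ((k₁ + k₂ : ℤ) : ℝ)) ∈ C := by
      rw [← midpt]
      exact hC hm1 hm2 (by norm_num) (by norm_num) (by norm_num)
    by_cases hev : Even (l₁ + l₂) ∧ Even (k₁ + k₂)
    · obtain ⟨⟨a, ha⟩, ⟨b, hb⟩⟩ := hev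
      -- l₁ + l₂ = 2a, k₁ + k₂ = 2b
      have ha' : l₁ + l₂ = 2 * a := by omega
      have hb' : k₁ + k₂ = 2 * b := by omega
      have hne2 : (l₁, k₁) ≠ (a, b) := by
        intro h
        apply hne
        rw [Prod.mk.injEq] at h ⊢
        omega
      have hmid' : (((2 * a : ℤ) : ℝ), ((2 * b : ℤ) : ℝ)) ∈ C := by
        rwa [ha', hb'] at hmid
      have hlt : (l₁ - a).natAbs + (k₁ - b).natAbs < N := by
        have h0 : (l₁ - l₂).natAbs + (k₁ - k₂).natAbs ≠ 0 := by
          intro h0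
          apply hne
          rw [Prod.mk.injEq]
          omega
        have e1 : l₁ - l₂ = 2 * (l₁ - a) := by omega
        have e2 : k₁ - k₂ = 2 * (k₁ - b) := by omega
        rw [e1, e2] at hN h0
        simp only [Int.natAbs_mul] at hN h0
        norm_num at hN h0
        omega
      exact ih _ hlt l₁ k₁ a b le_rfl h1 h2 h3 h4 (by omega) (by omega)
        (by omega) (by omega) hne2 ⟨hm1, hmid'⟩
    · exact hP (l₁ + l₂) (k₁ + k₂) (by omega) (by omega) (by omega) (by omega) hev hmid
/-- For the grid set `P` (integer points `(m,k)` with `1 ≤ m,k ≤ K`, not both coordinates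
even), any family of convex subsets of `ℝ² \ P` covering `ℝ² \ P` has at least `(K/2)²`
members, because no convex set disjoint from `P` contains two distinct points of the form
`(2ℓ, 2k)` with coordinates in `[1, K]`. -/
theorem stmt_17 (K : ℤ) (hK : 2 ≤ K) :
    let P : Set (ℝ × ℝ) := {q | ∃ m k : ℤ, 1 ≤ m ∧ m ≤ K ∧ 1 ≤ k ∧ k ≤ K ∧
      ¬ (Even m ∧ Even k) ∧ q = ((m : ℝ), (k : ℝ))}
    (∀ C : Set (ℝ × ℝ), Convex ℝ C → C ⊆ Pᶜ →
      ∀ l₁ k₁ l₂ k₂ : ℤ, 1 ≤ 2 * l₁ → 2 * l₁ ≤ K → 1 ≤ 2 * k₁ → 2 * k₁ ≤ K →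
        1 ≤ 2 * l₂ → 2 * l₂ ≤ K → 1 ≤ 2 * k₂ → 2 * k₂ ≤ K →
        (l₁, k₁) ≠ (l₂, k₂) →
        ¬ ((((2 * l₁ : ℤ) : ℝ), ((2 * k₁ : ℤ) : ℝ)) ∈ C ∧
           (((2 * l₂ : ℤ) : ℝ), ((2 * k₂ : ℤ) : ℝ)) ∈ C))
    ∧
    (∀ 𝒦 : Finset (Set (ℝ × ℝ)),
      (∀ C ∈ 𝒦, Convex ℝ C) → (∀ C ∈ 𝒦, C ⊆ Pᶜ) →
      (⋃₀ (𝒦 : Set (Set (ℝ × ℝ)))) = Pᶜ →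
      (K / 2) ^ 2 ≤ (𝒦.card : ℤ)) := by
  intro P
  have part1 : ∀ C : Set (ℝ × ℝ), Convex ℝ C → C ⊆ Pᶜ →
      ∀ l₁ k₁ l₂ k₂ : ℤ, 1 ≤ 2 * l₁ → 2 * l₁ ≤ K → 1 ≤ 2 * k₁ → 2 * k₁ ≤ K →
        1 ≤ 2 * l₂ → 2 * l₂ ≤ K → 1 ≤ 2 * k₂ → 2 * k₂ ≤ K →
        (l₁, k₁) ≠ (l₂, k₂) →
        ¬ ((((2 * l₁ : ℤ) : ℝ), ((2 * k₁ : ℤ) : ℝ)) ∈ C ∧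
           (((2 * l₂ : ℤ) : ℝ), ((2 * k₂ : ℤ) : ℝ)) ∈ C) := by
    intro C hC hsub l₁ k₁ l₂ k₂ h1 h2 h3 h4 h5 h6 h7 h8 hne
    have hP : ∀ m k : ℤ, 1 ≤ m → m ≤ K → 1 ≤ k → k ≤ K → ¬ (Even m ∧ Even k) →
        ((m : ℝ), (k : ℝ)) ∉ C := by
      intro m k hm1 hm2 hk1 hk2 hev hmem
      exact hsub hmem ⟨m, k, hm1, hm2, hk1, hk2, hev, rfl⟩
    exact aux_key_s17 K C hC hP ((l₁ - l₂).natAbs + (k₁ - k₂).natAbs) l₁ k₁ l₂ k₂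
      le_rfl h1 h2 h3 h4 h5 h6 h7 h8 hne
  refine ⟨part1, ?_⟩
  intro 𝒦 hconv hsub hcover
  set pt : ℤ × ℤ → ℝ × ℝ := fun x => (((2 * x.1 : ℤ) : ℝ), ((2 * x.2 : ℤ) : ℝ)) with hpt
  set S : Finset (ℤ × ℤ) := Finset.Icc 1 (K / 2) ×ˢ Finset.Icc 1 (K / 2) with hS
  have hmemS : ∀ x ∈ S, 1 ≤ 2 * x.1 ∧ 2 * x.1 ≤ K ∧ 1 ≤ 2 * x.2 ∧ 2 * x.2 ≤ K := by
    intro x hx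
    rw [hS, Finset.mem_product, Finset.mem_Icc, Finset.mem_Icc] at hx
    have := Int.mul_ediv_add_emod K 2
    have := Int.emod_emod_of_dvd K (dvd_refl 2)
    have h2 : 0 ≤ K % 2 := Int.emod_nonneg K (by norm_num)
    have h3 : K % 2 < 2 := Int.emod_lt_of_pos K (by norm_num)
    omega
  have hex : ∀ x ∈ S, ∃ C ∈ 𝒦, pt x ∈ C := by
    intro x hx
    obtain ⟨hb1, hb2, hb3, hb4⟩ := hmemS x hx
    have hnP : pt x ∈ Pᶜ := by
      intro hmem
      obtain ⟨m, k, _, _, _, _, hev, heq⟩ := hmem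
      rw [hpt] at heq
      simp only [Prod.mk.injEq] at heq
      have hm : (2 * x.1 : ℤ) = m := by exact_mod_cast heq.1
      have hk : (2 * x.2 : ℤ) = k := by exact_mod_cast heq.2
      exact hev ⟨⟨x.1, by omega⟩, ⟨x.2, by omega⟩⟩
    rw [← hcover] at hnP
    obtain ⟨C, hC1, hC2⟩ := hnP
    exact ⟨C, hC1, hC2⟩
  choose! f hf1 hf2 using hex
  have hinj : Set.InjOn f S := by
    intro x hx y hy hfxy
    by_contra hxy
    obtain ⟨a1, a2, a3, a4⟩ := hmemS x hx
    obtain ⟨b1, b2, b3, b4⟩ := hmemS y hy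
    refine part1 (f x) (hconv _ (hf1 x hx)) (hsub _ (hf1 x hx))
      x.1 x.2 y.1 y.2 a1 a2 a3 a4 b1 b2 b3 b4 ?_ ⟨hf2 x hx, hfxy ▸ hf2 y hy⟩
    intro h
    exact hxy (Prod.ext (congrArg Prod.fst h) (congrArg Prod.snd h))
  have hcard : S.card ≤ 𝒦.card :=
    Finset.card_le_card_of_injOn f (fun x hx => hf1 x hx) hinj
  have hScard : S.card = (K / 2).toNat ^ 2 := by
    rw [hS, Finset.card_product, Int.card_Icc]
    simp [sq]
  have hK2 : 1 ≤ K / 2 := by omega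
  have : ((K / 2).toNat : ℤ) = K / 2 := Int.toNat_of_nonneg (by omega)
  calc (K / 2) ^ 2 = (((K / 2).toNat : ℤ)) ^ 2 := by rw [this]
    _ = ((S.card : ℤ)) := by rw [hScard]; push_cast; ring
    _ ≤ (𝒦.card : ℤ) := by exact_mod_cast hcard
end
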